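/- arXiv:2209.06492 — 7 statements merged into one kernel-verified Lean document; each statement's English description precedes it below -/
import Mathlib

section
/- Let (G,𝒮) be a profinite group pair. If every lifting problem of G relative to 𝒮 whose kernel is a finite abelian group has a solution, then every lifting problem of G relative to 𝒮 whose kernel is a finite solvable group has a solution. -/
/-- The sheaf space `𝒮 = {(g,x) ∈ G × X | g ∈ S x}` of a family of subgroups. -/
abbrev SheafSpace {G X : Type} [Group G] [TopologicalSpace G] [TopologicalSpace X]
    (S : X → Subgroup G) : Type := {gx : G × X // gx.1 ∈ S gx.2}

/-- The data `(α, φ, σ)` forms a lifting problem of `G` relative to `𝒮`: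
`α : H → Q` is a continuous surjection of profinite groups, `φ : G → Q` a continuous
homomorphism, and `σ : 𝒮 → H` a continuous map which is a homomorphism `S x → H` on each
fibre, lifting `φ` there. -/
def IsLiftingProblem {G X H Q : Type} [Group G] [TopologicalSpace G] [TopologicalSpace X]
    [Group H] [TopologicalSpace H] [Group Q] [TopologicalSpace Q]
    (S : X → Subgroup G) (α : H →* Q) (φ : G →* Q) (σ : SheafSpace S → H) : Prop :=
  Continuous α ∧ Function.Surjective α ∧ Continuous φ ∧ Continuous σ ∧
  (∀ (x : X) (s s' : G) (hs : s ∈ S x) (hs' : s' ∈ S x),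
      σ ⟨(s * s', x), mul_mem hs hs'⟩ = σ ⟨(s, x), hs⟩ * σ ⟨(s', x), hs'⟩) ∧
  (∀ (x : X) (s : G) (hs : s ∈ S x), α (σ ⟨(s, x), hs⟩) = φ s)

/-- A solution of the lifting problem `(α, φ, σ)`: a continuous homomorphism `φ̄ : G → H`
with `α ∘ φ̄ = φ` and a continuous map `c : X → ker α` with
`c x * φ̄ s * (c x)⁻¹ = σ (s, x)` for all `x ∈ X` and `s ∈ S x`. -/
def HasSolution {G X H Q : Type} [Group G] [TopologicalSpace G] [TopologicalSpace X]
    [Group H] [TopologicalSpace H] [Group Q] [TopologicalSpace Q]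
    (S : X → Subgroup G) (α : H →* Q) (φ : G →* Q) (σ : SheafSpace S → H) : Prop :=
  ∃ (φbar : G →* H) (c : X → H),
    Continuous φbar ∧ (∀ g, α (φbar g) = φ g) ∧
    Continuous c ∧ (∀ x, c x ∈ α.ker) ∧
    ∀ (x : X) (s : G) (hs : s ∈ S x), c x * φbar s * (c x)⁻¹ = σ ⟨(s, x), hs⟩

/-!
Induction on `|ker α|`. Put `K = ker α` and `N = ⁅K, K⁆`. Pushed to `H ⧸ N`, the problem has the
abelian kernel `K ⧸ N`, so it has a solution `(ψ, c)`. Lift `c` to a continuous `d : X → K` and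
conjugate `σ` by `d`: this gives a lifting problem along `H → H ⧸ N` with lifting target `ψ`, whose
kernel `N` is smaller than `K` because `K` is solvable. Multiplying its solution by `d` solves the
original problem.
-/

open QuotientGroup in
theorem QuotientGroup.totallyDisconnectedSpace_of_isClosed {H : Type*} [Group H]
    [TopologicalSpace H] [IsTopologicalGroup H] [CompactSpace H] [TotallyDisconnectedSpace H]
    {N : Subgroup H} [N.Normal] (hN : IsClosed (N : Set H)) :
    TotallyDisconnectedSpace (H ⧸ N) := by
  rw [totallyDisconnectedSpace_iff_connectedComponent_one, Set.eq_singleton_iff_unique_mem]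
  refine ⟨mem_connectedComponent, fun y hy => ?_⟩
  obtain ⟨g, rfl⟩ := mk_surjective y
  have hNinf : N = sInf {U : Subgroup H | IsOpen (U : Set H) ∧ N ≤ U} :=
    ProfiniteGrp.closedSubgroup_eq_sInf_open ⟨N, hN⟩
  suffices g ∈ N by simpa using this
  rw [hNinf, Subgroup.mem_sInf]
  rintro U ⟨hU, hNU⟩
  -- the image of `U` is an open, hence clopen, subgroup, so it contains the identity component
  have hopen : IsOpen (U.map (mk' N) : Set (H ⧸ N)) := by
    rw [Subgroup.coe_map]; exact isOpenMap_coe (N := N) _ hU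
  have hclopen : IsClopen (U.map (mk' N) : Set (H ⧸ N)) :=
    ⟨Subgroup.isClosed_of_isOpen _ hopen, hopen⟩
  have hg : mk' N g ∈ U.map (mk' N) :=
    hclopen.connectedComponent_subset (one_mem _) hy
  rwa [← Subgroup.mem_comap, Subgroup.comap_map_eq, ker_mk', sup_eq_left.mpr hNU] at hg

theorem Continuous.exists_continuous_lift_of_finite_range {X Y Z : Type*} [TopologicalSpace X]
    [TopologicalSpace Y] [TopologicalSpace Z] [T1Space Z] {f : Y → Z}
    (hf : Function.Surjective f) {c : X → Z} (hc : Continuous c) (hfin : (Set.range c).Finite) :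
    ∃ d : X → Y, Continuous d ∧ ∀ x, f (d x) = c x := by
  have : Finite (Set.range c) := hfin.to_subtype
  refine ⟨fun x => Function.surjInv hf (Set.rangeFactorization c x), ?_, fun x => ?_⟩
  · exact (continuous_of_discreteTopology (f := fun z : Set.range c => Function.surjInv hf z)).comp
      hc.rangeFactorization
  · exact Function.surjInv_eq hf _

theorem QuotientGroup.finite_ker_lift {H Q : Type*} [Group H] [Group Q] {α : H →* Q}
    [Finite α.ker] {N : Subgroup H} [N.Normal] (hN : N ≤ α.ker) :
    Finite (QuotientGroup.lift N α hN).ker := by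
  rw [QuotientGroup.ker_lift]
  exact ((Set.toFinite (α.ker : Set H)).image _).to_subtype

namespace IsLiftingProblem

variable {G X H Q : Type} [Group G] [TopologicalSpace G] [TopologicalSpace X]
  [Group H] [TopologicalSpace H] [Group Q] [TopologicalSpace Q]
  {S : X → Subgroup G} {α : H →* Q} {φ : G →* Q} {σ : SheafSpace S → H}

theorem quotient (hP : IsLiftingProblem S α φ σ) (N : Subgroup H) [N.Normal]
    (hN : N ≤ α.ker) :
    IsLiftingProblem S (QuotientGroup.lift N α hN) φ (fun p => (σ p : H ⧸ N)) := by
  obtain ⟨hα, hαs, hφ, hσ, hσmul, hασ⟩ := hP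
  exact ⟨continuous_quot_lift _ hα, QuotientGroup.lift_surjective_of_surjective _ _ hαs hN, hφ,
    continuous_quot_mk.comp hσ,
    fun x s s' hs hs' => by beta_reduce; rw [hσmul x s s' hs hs', QuotientGroup.mk_mul],
    fun x s hs => hασ x s hs⟩

theorem conj_quotient [IsTopologicalGroup H] (hP : IsLiftingProblem S α φ σ)
    {N : Subgroup H} [N.Normal] {ψ : G →* H ⧸ N} (hψ : Continuous ψ) {d : X → H}
    (hd : Continuous d)
    (hconj : ∀ x s (hs : s ∈ S x), (d x : H ⧸ N) * ψ s * (d x : H ⧸ N)⁻¹ = σ ⟨(s, x), hs⟩) :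
    IsLiftingProblem S (QuotientGroup.mk' N) ψ (fun p => (d p.1.2)⁻¹ * σ p * d p.1.2) := by
  obtain ⟨-, -, -, hσ, hσmul, -⟩ := hP
  have hdp : Continuous fun p : SheafSpace S => d p.1.2 := hd.comp (by fun_prop)
  refine ⟨continuous_quot_mk, QuotientGroup.mk'_surjective N, hψ, (hdp.inv.mul hσ).mul hdp,
    fun x s s' hs hs' => by beta_reduce; rw [hσmul x s s' hs hs']; group, fun x s hs => ?_⟩
  simp only [QuotientGroup.mk'_apply, QuotientGroup.mk_mul, QuotientGroup.mk_inv, ← hconj]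
  group

theorem hasSolution_of_quotient [IsTopologicalGroup H] (hP : IsLiftingProblem S α φ σ)
    [Finite α.ker] {N : Subgroup H} [N.Normal] (hNc : IsClosed (N : Set H)) (hN : N ≤ α.ker)
    (hmod : HasSolution S (QuotientGroup.lift N α hN) φ (fun p => (σ p : H ⧸ N)))
    (hker : ∀ (ψ : G →* H ⧸ N) (τ : SheafSpace S → H),
      IsLiftingProblem S (QuotientGroup.mk' N) ψ τ → HasSolution S (QuotientGroup.mk' N) ψ τ) :
    HasSolution S α φ σ := by
  obtain ⟨ψ, c, hψ, hαψ, hc, hcker, hcconj⟩ := hmod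
  have := QuotientGroup.finite_ker_lift hN
  have hcfin : (Set.range c).Finite :=
    (Set.toFinite ((QuotientGroup.lift N α hN).ker : Set (H ⧸ N))).subset
      (Set.range_subset_iff.mpr hcker)
  obtain ⟨d, hd, hdc⟩ :=
    hc.exists_continuous_lift_of_finite_range QuotientGroup.mk_surjective hcfin
  have hdker : ∀ x, d x ∈ α.ker := fun x => by
    simpa only [MonoidHom.mem_ker, ← hdc, QuotientGroup.lift_mk] using hcker x
  obtain ⟨φb, e, hφb, hφbψ, he, heN, heconj⟩ := hker ψ _ <|
    hP.conj_quotient hψ hd fun x s hs => by rw [hdc]; exact hcconj x s hs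
  refine ⟨φb, fun x => d x * e x, hφb, fun g => ?_, hd.mul he, fun x => ?_, fun x s hs => ?_⟩
  · rw [← hαψ, ← hφbψ, QuotientGroup.mk'_apply, QuotientGroup.lift_mk]
  · exact mul_mem (hdker x) (hN (by simpa using heN x))
  · calc d x * e x * φb s * (d x * e x)⁻¹ = d x * (e x * φb s * (e x)⁻¹) * (d x)⁻¹ := by group
      _ = σ ⟨(s, x), hs⟩ := by rw [heconj x s hs]; group

end IsLiftingProblem

theorem Subgroup.commutator_lt_self_of_isSolvable {H : Type*} [Group H] {K : Subgroup H}
    [Group.IsSolvable K] (hK : K ≠ ⊥) : ⁅K, K⁆ < K := by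
  rw [← nontrivial_iff_ne_bot] at hK
  rw [← K.map_subtype_commutator]
  conv_rhs => rw [← K.range_subtype, MonoidHom.range_eq_map]
  rw [Subgroup.map_subtype_lt_map_subtype]
  exact Group.IsSolvable.commutator_lt_top_of_nontrivial K

theorem Subgroup.isMulCommutative_map_mk'_commutator {H : Type*} [Group H] (K : Subgroup H)
    [⁅K, K⁆.Normal] : IsMulCommutative (K.map (QuotientGroup.mk' ⁅K, K⁆)) := by
  rw [← Subgroup.commutator_self_eq_bot_iff, ← Subgroup.map_commutator, QuotientGroup.map_mk'_self]

theorem solvable_kernel_lifting_general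
    (G : Type) [Group G] [TopologicalSpace G]
    (X : Type) [TopologicalSpace X]
    (S : X → Subgroup G)
    (hab : ∀ (H Q : Type) [Group H] [TopologicalSpace H] [IsTopologicalGroup H]
        [CompactSpace H] [T2Space H] [TotallyDisconnectedSpace H]
        [Group Q] [TopologicalSpace Q] [IsTopologicalGroup Q]
        [CompactSpace Q] [T2Space Q] [TotallyDisconnectedSpace Q]
        (α : H →* Q) (φ : G →* Q) (σ : SheafSpace S → H),
        IsLiftingProblem S α φ σ → Finite α.ker → (∀ a b : α.ker, a * b = b * a) →
        HasSolution S α φ σ) :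
    ∀ (H Q : Type) [Group H] [TopologicalSpace H] [IsTopologicalGroup H]
        [CompactSpace H] [T2Space H] [TotallyDisconnectedSpace H]
        [Group Q] [TopologicalSpace Q] [IsTopologicalGroup Q]
        [CompactSpace Q] [T2Space Q] [TotallyDisconnectedSpace Q]
        (α : H →* Q) (φ : G →* Q) (σ : SheafSpace S → H),
      IsLiftingProblem S α φ σ → Finite α.ker → IsSolvable α.ker →
      HasSolution S α φ σ := by
  intro H Q _ _ _ _ _ _ _ _ _ _ _ _ α φ σ hP hfin hsolv
  induction hn : Nat.card α.ker using Nat.strong_induction_on generalizing H Q with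
  | _ n ih =>
  have : Group.IsSolvable α.ker := hsolv
  by_cases hK : α.ker = ⊥
  · have : Subsingleton α.ker := by rw [hK]; infer_instance
    exact hab H Q α φ σ hP hfin fun a b => Subsingleton.elim _ _
  set N := ⁅α.ker, α.ker⁆
  have hNK : N < α.ker := Subgroup.commutator_lt_self_of_isSolvable hK
  have hNfin : (N : Set H).Finite := (Set.toFinite (α.ker : Set H)).subset hNK.le
  have hNc : IsClosed (N : Set H) := hNfin.isClosed
  have := QuotientGroup.totallyDisconnectedSpace_of_isClosed hNc
  refine hP.hasSolution_of_quotient hNc hNK.le ?_ fun ψ τ hP' => ?_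
  · have hcomm := α.ker.isMulCommutative_map_mk'_commutator
    rw [← QuotientGroup.ker_lift N α hNK.le] at hcomm
    exact hab _ Q _ φ _ (hP.quotient N hNK.le) (QuotientGroup.finite_ker_lift hNK.le)
      fun a b => Std.Commutative.comm a b
  · have hker : (QuotientGroup.mk' N).ker = N := QuotientGroup.ker_mk' N
    refine ih _ ?_ H (H ⧸ N) _ ψ τ hP' ?_ ?_ rfl
    · rw [hker, ← hn]; exact Set.Finite.card_lt_card (Set.toFinite _) hNK
    · rw [hker]; exact hNfin.to_subtype
    · rw [hker]
      exact Group.isSolvable_of_isSolvable_injective (Subgroup.inclusion_injective hNK.le)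

/-- Let `(G,𝒮)` be a profinite group pair. If every lifting problem of `G`
relative to `𝒮` with finite abelian kernel has a solution, then every lifting problem of `G`
relative to `𝒮` with finite solvable kernel has a solution. -/
theorem solvable_kernel_lifting
    (G : Type) [Group G] [TopologicalSpace G] [IsTopologicalGroup G]
    [CompactSpace G] [T2Space G] [TotallyDisconnectedSpace G]
    (X : Type) [TopologicalSpace X] [CompactSpace X] [T2Space X]
    [TotallyDisconnectedSpace X]
    (S : X → Subgroup G) (hclosed : ∀ x, IsClosed (S x : Set G))
    (hidx : IsClosed {gx : G × X | gx.1 ∈ S gx.2})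
    (hab : ∀ (H Q : Type) [Group H] [TopologicalSpace H] [IsTopologicalGroup H]
        [CompactSpace H] [T2Space H] [TotallyDisconnectedSpace H]
        [Group Q] [TopologicalSpace Q] [IsTopologicalGroup Q]
        [CompactSpace Q] [T2Space Q] [TotallyDisconnectedSpace Q]
        (α : H →* Q) (φ : G →* Q) (σ : SheafSpace S → H),
        IsLiftingProblem S α φ σ → Finite α.ker → (∀ a b : α.ker, a * b = b * a) →
        HasSolution S α φ σ) :
    ∀ (H Q : Type) [Group H] [TopologicalSpace H] [IsTopologicalGroup H]
        [CompactSpace H] [T2Space H] [TotallyDisconnectedSpace H]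
        [Group Q] [TopologicalSpace Q] [IsTopologicalGroup Q]
        [CompactSpace Q] [T2Space Q] [TotallyDisconnectedSpace Q]
        (α : H →* Q) (φ : G →* Q) (σ : SheafSpace S → H),
      IsLiftingProblem S α φ σ → Finite α.ker → IsSolvable α.ker →
      HasSolution S α φ σ :=
  solvable_kernel_lifting_general G X S hab
end

section
/- Let (G,𝒮) be a profinite group pair. If every lifting problem of G relative to 𝒮 with finite kernel has a solution, then every lifting problem of G relative to 𝒮 (with arbitrary closed kernel) has a solution. -/
/-!
Call a solution of the induced problem `H ⧸ N → Q`, for a closed normal subgroup `N ≤ ker α`,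
a partial solution, and order partial solutions by refinement. Along a chain the subgroups `N`
shrink, and compactness of `H` lets the data descend to the quotient by their intersection, so
Zorn's lemma gives a maximal partial solution `(N, φ̄, c)`. For an open normal subgroup `U`, the
projection `p : H ⧸ (N ⊓ U) → H ⧸ N` has finite kernel and therefore a continuous section. Lifting
`c` along it to `d` and replacing `σ` by `d⁻¹ σ d` makes `(p, φ̄, d⁻¹ σ d)` a lifting problem with
finite kernel, and its solution refines `(N, φ̄, c)` to `N ⊓ U`. So the maximal `N` lies in every
open normal subgroup, i.e. `N = 1`.
-/

namespace QuotientGroup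

section mapOfLE

variable {H : Type} [Group H]

def mapOfLE {M N : Subgroup H} [M.Normal] [N.Normal] (h : M ≤ N) : H ⧸ M →* H ⧸ N :=
  map M N (MonoidHom.id H) h

variable {L M N : Subgroup H} [L.Normal] [M.Normal] [N.Normal]

@[simp]
theorem mapOfLE_mk (h : M ≤ N) (x : H) : mapOfLE h (x : H ⧸ M) = x :=
  rfl

@[simp]
theorem mapOfLE_refl (h : N ≤ N) : mapOfLE h = MonoidHom.id (H ⧸ N) :=
  MonoidHom.ext fun y => induction_on y fun _ => rfl

@[simp]
theorem mapOfLE_comp_mapOfLE (hLM : L ≤ M) (hMN : M ≤ N) :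
    (mapOfLE hMN).comp (mapOfLE hLM) = mapOfLE (hLM.trans hMN) :=
  MonoidHom.ext fun y => induction_on y fun _ => rfl

theorem lift_mapOfLE {Q : Type} [Group Q] (α : H →* Q) (hMN : M ≤ N) (hN : N ≤ α.ker)
    (y : H ⧸ M) : lift N α hN (mapOfLE hMN y) = lift M α (hMN.trans hN) y :=
  induction_on y fun _ => rfl

theorem continuous_mapOfLE [TopologicalSpace H] (h : M ≤ N) : Continuous (mapOfLE h) :=
  (isQuotientMap_mk M).continuous_iff.2 continuous_mk

theorem eq_of_mapOfLE_iInf_eq {ι : Type} (N : ι → Subgroup H) [∀ i, (N i).Normal]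
    [(⨅ i, N i).Normal] {y y' : H ⧸ ⨅ i, N i}
    (h : ∀ i, mapOfLE (iInf_le N i) y = mapOfLE (iInf_le N i) y') : y = y' :=
  (Subgroup.quotientiInfEmbedding N).injective <| funext fun i => by
    induction y using induction_on
    induction y' using induction_on
    exact h i

end mapOfLE

variable {H : Type} [Group H] [TopologicalSpace H] [IsTopologicalGroup H] [CompactSpace H]

theorem continuous_of_continuous_mapOfLE_iInf {ι : Type} (N : ι → Subgroup H)
    [∀ i, (N i).Normal] [∀ i, IsClosed (N i : Set H)] [(⨅ i, N i).Normal] {Y : Type}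
    [TopologicalSpace Y] {f : Y → H ⧸ ⨅ i, N i}
    (hf : ∀ i, Continuous (mapOfLE (iInf_le N i) ∘ f)) : Continuous f := by
  have hπ : Continuous fun y (i : ι) => mapOfLE (iInf_le N i) y :=
    continuous_pi fun i => continuous_mapOfLE _
  refine ((hπ.isClosedEmbedding fun y y' hyy' => ?_).continuous_iff).2 (continuous_pi hf)
  exact eq_of_mapOfLE_iInf_eq N fun i => congrFun hyy' i

theorem exists_mk_eq_of_directed {ι : Type} [Nonempty ι] (N : ι → Subgroup H)
    [∀ i, IsClosed (N i : Set H)] (y : ∀ i, H ⧸ N i)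
    (hy : Directed (· ⊇ ·) fun i => ((↑) : H → H ⧸ N i) ⁻¹' {y i}) :
    ∃ h : H, ∀ i, (h : H ⧸ N i) = y i := by
  have hclosed (i : ι) : IsClosed (((↑) : H → H ⧸ N i) ⁻¹' {y i}) :=
    isClosed_singleton.preimage continuous_mk
  obtain ⟨h, hh⟩ := IsCompact.nonempty_iInter_of_directed_nonempty_isCompact_isClosed _ hy
    (fun i => mk_surjective (y i)) (fun i => (hclosed i).isCompact) hclosed
  exact ⟨h, Set.mem_iInter.1 hh⟩

theorem finite_ker_mapOfLE_inf (N : Subgroup H) [N.Normal] (U : OpenNormalSubgroup H) :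
    Finite (mapOfLE (inf_le_left : N ⊓ U.toSubgroup ≤ N)).ker := by
  have := Subgroup.quotient_finite_of_isOpen U.toSubgroup U.isOpen
  refine Finite.of_injective
    (fun y => mapOfLE (inf_le_right : N ⊓ U.toSubgroup ≤ U.toSubgroup) y.1) ?_
  rintro ⟨y, hy⟩ ⟨y', hy'⟩ hyy'
  obtain ⟨h, rfl⟩ := mk_surjective y
  obtain ⟨h', rfl⟩ := mk_surjective y'
  simp only [MonoidHom.mem_ker, mapOfLE_mk, eq_one_iff] at hy hy' hyy'
  exact Subtype.ext (QuotientGroup.eq.2 ⟨N.mul_mem (N.inv_mem hy) hy', QuotientGroup.eq.1 hyy'⟩)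

variable [TotallyDisconnectedSpace H]

theorem totallyDisconnectedSpace (N : Subgroup H) [N.Normal] [IsClosed (N : Set H)] :
    TotallyDisconnectedSpace (H ⧸ N) := by
  rw [totallyDisconnectedSpace_iff_connectedComponent_one, Set.eq_singleton_iff_unique_mem]
  refine ⟨mem_connectedComponent, fun y hy => ?_⟩
  obtain ⟨h, rfl⟩ := mk_surjective y
  by_contra hne
  have hh : h ∉ (⟨N, ‹_›⟩ : ClosedSubgroup H).toSubgroup :=
    fun hN => hne ((eq_one_iff h).2 hN)
  rw [ProfiniteGrp.closedSubgroup_eq_sInf_open] at hh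
  obtain ⟨V, hVo, hNV, hhV⟩ : ∃ V : Subgroup H, IsOpen (V : Set H) ∧ N ≤ V ∧ h ∉ V := by
    simpa [Subgroup.mem_sInf] using hh
  let V' : OpenSubgroup (H ⧸ N) := ⟨V.map (mk' N), isOpenMap_coe _ hVo⟩
  obtain ⟨v, hv, hvh⟩ := V'.isClopen.connectedComponent_subset V'.one_mem hy
  exact hhV (by simpa using V.mul_mem hv (hNV (QuotientGroup.eq.1 hvh)))

end QuotientGroup

section ProfiniteGroup

variable {A : Type} [Group A] [TopologicalSpace A] [IsTopologicalGroup A] [CompactSpace A]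
  [TotallyDisconnectedSpace A]

theorem Subgroup.eq_bot_of_forall_le_openNormalSubgroup (N : Subgroup A)
    (hN : ∀ U : OpenNormalSubgroup A, N ≤ U.toSubgroup) : N = ⊥ := by
  refine (Subgroup.eq_bot_iff_forall N).2 fun h hh => by_contra fun hne => ?_
  obtain ⟨U, hU⟩ := ProfiniteGrp.exist_openNormalSubgroup_sub_open_nhds_of_one
    (isOpen_compl_singleton (x := h)) (Ne.symm hne)
  exact hU (hN U hh) rfl

theorem exists_openNormalSubgroup_inf_eq_bot (K : Subgroup A) [Finite K] :
    ∃ V : OpenNormalSubgroup A, V.toSubgroup ⊓ K = ⊥ := by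
  have hK : IsClosed ((K : Set A) \ {1}) := (Set.toFinite _).sdiff.isClosed
  obtain ⟨V, hV⟩ := ProfiniteGrp.exist_openNormalSubgroup_sub_open_nhds_of_one hK.isOpen_compl
    fun h => h.2 rfl
  exact ⟨V, (Subgroup.eq_bot_iff_forall _).2 fun v hv => by_contra fun hne => hV hv.1 ⟨hv.2, hne⟩⟩

end ProfiniteGroup

section ContinuousSection

variable {A B : Type} [Group A] [TopologicalSpace A] [IsTopologicalGroup A] [CompactSpace A]
  [Group B] [TopologicalSpace B] [IsTopologicalGroup B] [T2Space B]

theorem exists_continuous_section_of_injOn (p : A →* B) (hp : Continuous p)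
    (hsurj : Function.Surjective p) (V : OpenSubgroup A) (hV : Set.InjOn p V) :
    ∃ s : B → A, Continuous s ∧ ∀ b, p (s b) = b := by
  let W : OpenSubgroup B := ⟨V.toSubgroup.map p,
    (MonoidHom.isOpenQuotientMap_of_isQuotientMap
      (Topology.IsQuotientMap.of_surjective_continuous hsurj hp)).isOpenMap _ V.isOpen⟩
  have : CompactSpace V := isCompact_iff_compactSpace.1 V.isClosed.isCompact
  let pV : V → W := fun v => ⟨p v, v, v.2, rfl⟩
  have hpV : Function.Bijective pV :=
    ⟨fun v w hvw => Subtype.ext (hV v.2 w.2 (congrArg Subtype.val hvw)),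
      fun ⟨_, v, hv, hvb⟩ => ⟨⟨v, hv⟩, Subtype.ext hvb⟩⟩
  have hpVc : Continuous pV := (hp.comp continuous_subtype_val).subtype_mk _
  let e : V ≃ₜ W := hpVc.homeoOfEquivCompactToT2 (f := Equiv.ofBijective pV hpV)
  have := QuotientGroup.discreteTopology W.isOpen
  choose r hr using fun β : B ⧸ W.toSubgroup =>
    (QuotientGroup.mk_surjective.comp hsurj :
      Function.Surjective fun a => (p a : B ⧸ W.toSubgroup)) β
  have hrW (b : B) : (p (r b))⁻¹ * b ∈ W := QuotientGroup.eq.1 (hr b)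
  have hrc : Continuous fun b : B => r b :=
    continuous_of_discreteTopology.comp QuotientGroup.continuous_mk
  refine ⟨fun b => r b * e.symm ⟨(p (r b))⁻¹ * b, hrW b⟩, ?_, fun b => ?_⟩
  · exact hrc.mul (continuous_subtype_val.comp (e.symm.continuous.comp
      (((hp.comp hrc).inv.mul continuous_id).subtype_mk _)))
  · have he : p (e.symm ⟨(p (r b))⁻¹ * b, hrW b⟩) = (p (r b))⁻¹ * b :=
      congrArg Subtype.val (e.apply_symm_apply _ : pV (e.symm _) = _)
    rw [map_mul, he, mul_inv_cancel_left]

theorem exists_continuous_section_of_finite_ker [TotallyDisconnectedSpace A] (p : A →* B)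
    (hp : Continuous p) (hsurj : Function.Surjective p) [Finite p.ker] :
    ∃ s : B → A, Continuous s ∧ ∀ b, p (s b) = b := by
  obtain ⟨V, hV⟩ := exists_openNormalSubgroup_inf_eq_bot p.ker
  refine exists_continuous_section_of_injOn p hp hsurj V.toOpenSubgroup fun v hv w hw hvw => ?_
  have : v⁻¹ * w ∈ V.toSubgroup ⊓ p.ker :=
    ⟨V.mul_mem (V.inv_mem hv) hw, p.mem_ker.2 (by rw [map_mul, map_inv, hvw, inv_mul_cancel])⟩
  rwa [hV, Subgroup.mem_bot, inv_mul_eq_one] at this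

end ContinuousSection

section LiftingProblem

variable {G X H Q : Type} [Group G] [TopologicalSpace G] [TopologicalSpace X]
  [Group H] [TopologicalSpace H] [Group Q]

def HasFiniteKernelLiftings (S : X → Subgroup G) : Prop :=
  ∀ (H Q : Type) [Group H] [TopologicalSpace H] [IsTopologicalGroup H]
    [CompactSpace H] [T2Space H] [TotallyDisconnectedSpace H]
    [Group Q] [TopologicalSpace Q] [IsTopologicalGroup Q]
    [CompactSpace Q] [T2Space Q] [TotallyDisconnectedSpace Q]
    (α : H →* Q) (φ : G →* Q) (σ : SheafSpace S → H),
    IsLiftingProblem S α φ σ → Finite α.ker → HasSolution S α φ σ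

theorem isLiftingProblem_conj [IsTopologicalGroup H] [TopologicalSpace Q] {S : X → Subgroup G}
    {α : H →* Q} {φ : G →* Q} (hα : Continuous α) (hαs : Function.Surjective α)
    (hφ : Continuous φ) {τ : SheafSpace S → H} (hτ : Continuous τ)
    (hτmul : ∀ (x : X) (s s' : G) (hs : s ∈ S x) (hs' : s' ∈ S x),
      τ ⟨(s * s', x), mul_mem hs hs'⟩ = τ ⟨(s, x), hs⟩ * τ ⟨(s', x), hs'⟩)
    {d : X → H} (hd : Continuous d)
    (hτα : ∀ (x : X) (s : G) (hs : s ∈ S x), α (τ ⟨(s, x), hs⟩) = α (d x) * φ s * (α (d x))⁻¹) :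
    IsLiftingProblem S α φ fun z => (d z.1.2)⁻¹ * τ z * d z.1.2 := by
  have hdz : Continuous fun z : SheafSpace S => d z.1.2 :=
    hd.comp (continuous_snd.comp continuous_subtype_val)
  refine ⟨hα, hαs, hφ, (hdz.inv.mul hτ).mul hdz, fun x s s' hs hs' => ?_, fun x s hs => ?_⟩
  · simp only [hτmul x s s' hs hs', mul_assoc, mul_inv_cancel_left]
  · rw [map_mul, map_mul, map_inv, hτα]
    group

structure PartialSolution (S : X → Subgroup G) (α : H →* Q) (φ : G →* Q)
    (σ : SheafSpace S → H) where
  N : Subgroup H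
  [normal : N.Normal]
  [isClosed : IsClosed (N : Set H)]
  le_ker : N ≤ α.ker
  lift : G →* H ⧸ N
  conj : X → H ⧸ N
  continuous_lift : Continuous lift
  continuous_conj : Continuous conj
  lift_spec (g : G) : QuotientGroup.lift N α le_ker (lift g) = φ g
  conj_mem_ker (x : X) : QuotientGroup.lift N α le_ker (conj x) = 1
  conj_lift_conj (x : X) (s : G) (hs : s ∈ S x) :
    conj x * lift s * (conj x)⁻¹ = σ ⟨(s, x), hs⟩

namespace PartialSolution

attribute [instance] normal isClosed

open QuotientGroup

variable {S : X → Subgroup G} {α : H →* Q} {φ : G →* Q} {σ : SheafSpace S → H}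

instance : Preorder (PartialSolution S α φ σ) where
  le a b := ∃ h : b.N ≤ a.N, (mapOfLE h).comp b.lift = a.lift ∧ mapOfLE h ∘ b.conj = a.conj
  le_refl a := ⟨le_rfl, by simp, by simp⟩
  le_trans a b c := by
    rintro ⟨hab, hlift, hconj⟩ ⟨hbc, hlift', hconj'⟩
    refine ⟨hbc.trans hab, ?_, ?_⟩
    · rw [← hlift, ← hlift', ← MonoidHom.comp_assoc, mapOfLE_comp_mapOfLE]
    · rw [← hconj, ← hconj', ← Function.comp_assoc, ← MonoidHom.coe_comp, mapOfLE_comp_mapOfLE]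

theorem mk_eq_lift_of_le {a b : PartialSolution S α φ σ} (hab : a ≤ b) {h : H} {g : G}
    (hh : (h : H ⧸ b.N) = b.lift g) : (h : H ⧸ a.N) = a.lift g := by
  obtain ⟨hN, hlift, -⟩ := hab
  rw [← hlift, MonoidHom.comp_apply, ← hh, mapOfLE_mk]

theorem mk_eq_conj_of_le {a b : PartialSolution S α φ σ} (hab : a ≤ b) {h : H} {x : X}
    (hh : (h : H ⧸ b.N) = b.conj x) : (h : H ⧸ a.N) = a.conj x := by
  obtain ⟨hN, -, hconj⟩ := hab
  rw [← hconj, Function.comp_apply, ← hh, mapOfLE_mk]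

variable [CompactSpace H]

theorem nonempty [TopologicalSpace Q] [T2Space Q] (hP : IsLiftingProblem S α φ σ) :
    Nonempty (PartialSolution S α φ σ) := by
  obtain ⟨hαc, hαs, hφc, -, -, hσφ⟩ := hP
  have : IsClosed (α.ker : Set H) := isClosed_singleton.preimage hαc
  let e := quotientKerEquivOfSurjective α hαs
  have he : Continuous e := (isQuotientMap_mk _).continuous_iff.2 hαc
  have he' : Continuous e.symm := (he.homeoOfEquivCompactToT2 (f := e.toEquiv)).symm.continuous
  refine ⟨⟨α.ker, le_rfl, e.symm.toMonoidHom.comp φ, 1, he'.comp hφc, continuous_const,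
    fun g => e.apply_symm_apply (φ g), fun _ => map_one _, fun x s hs => ?_⟩⟩
  rw [Pi.one_apply, one_mul, inv_one, mul_one, MonoidHom.comp_apply, MulEquiv.coe_toMonoidHom,
    MulEquiv.symm_apply_eq, ← hσφ x s hs]
  rfl

variable [IsTopologicalGroup H]

theorem hasSolution_of_N_eq_bot [TopologicalSpace Q] (m : PartialSolution S α φ σ)
    (hm : m.N = ⊥) : HasSolution S α φ σ := by
  let e : H ≃* H ⧸ m.N := MulEquiv.ofBijective (mk' m.N)
    ⟨(MonoidHom.ker_eq_bot_iff _).1 ((ker_mk' _).trans hm), mk'_surjective _⟩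
  have he' : Continuous e.symm :=
    (continuous_mk.homeoOfEquivCompactToT2 (f := e.toEquiv)).symm.continuous
  have hα (y : H ⧸ m.N) : α (e.symm y) = QuotientGroup.lift m.N α m.le_ker y := by
    conv_rhs => rw [← e.apply_symm_apply y]
    rfl
  refine ⟨e.symm.toMonoidHom.comp m.lift, e.symm ∘ m.conj, he'.comp m.continuous_lift,
    fun g => (hα _).trans (m.lift_spec g), he'.comp m.continuous_conj,
    fun x => (hα _).trans (m.conj_mem_ker x), fun x s hs => e.injective ?_⟩
  simp only [map_mul, map_inv, Function.comp_apply, MonoidHom.comp_apply,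
    MulEquiv.coe_toMonoidHom, MulEquiv.apply_symm_apply]
  exact m.conj_lift_conj x s hs

theorem bddAbove_of_isChain (C : Set (PartialSolution S α φ σ)) (hC : IsChain (· ≤ ·) C)
    (hne : C.Nonempty) : BddAbove C := by
  obtain ⟨a₀, ha₀⟩ := hne
  have : Nonempty C := ⟨⟨a₀, ha₀⟩⟩
  let N : C → Subgroup H := fun a => a.1.N
  have : ∀ a, IsClosed (N a : Set H) := fun a => a.1.isClosed
  have : (⨅ a, N a).Normal := Subgroup.normal_iInf_normal fun a => a.1.normal
  have : IsClosed ((⨅ a, N a : Subgroup H) : Set H) := by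
    rw [Subgroup.coe_iInf]
    exact isClosed_iInter fun a => a.1.isClosed
  have hdir (y : ∀ a : C, H ⧸ N a)
      (hy : ∀ a b : C, a ≤ b → ∀ h : H, (h : H ⧸ N b) = y b → (h : H ⧸ N a) = y a) :
      Directed (· ⊇ ·) fun a => ((↑) : H → H ⧸ N a) ⁻¹' {y a} := fun a b => by
    obtain ⟨c, hc, hac, hbc⟩ := hC.directedOn a.1 a.2 b.1 b.2
    exact ⟨⟨c, hc⟩, hy a ⟨c, hc⟩ hac, hy b ⟨c, hc⟩ hbc⟩
  choose ℓ hℓ using fun g => exists_mk_eq_of_directed N (fun a => a.1.lift g)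
    (hdir _ fun a b hab _ => mk_eq_lift_of_le hab)
  choose κ hκ using fun x => exists_mk_eq_of_directed N (fun a => a.1.conj x)
    (hdir _ fun a b hab _ => mk_eq_conj_of_le hab)
  let lift : G →* H ⧸ ⨅ a, N a := MonoidHom.mk' (fun g => (ℓ g : H ⧸ ⨅ a, N a)) fun g g' =>
    eq_of_mapOfLE_iInf_eq N fun a => by simp [hℓ]
  let conj : X → H ⧸ ⨅ a, N a := fun x => κ x
  refine ⟨⟨⨅ a, N a, (iInf_le N ⟨a₀, ha₀⟩).trans a₀.le_ker, lift, conj,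
    continuous_of_continuous_mapOfLE_iInf N fun a => ?_,
    continuous_of_continuous_mapOfLE_iInf N fun a => ?_,
    fun g => ?_, fun x => ?_, fun x s hs => ?_⟩, fun a ha => ?_⟩
  · exact (funext (hℓ · a) : mapOfLE _ ∘ lift = a.1.lift) ▸ a.1.continuous_lift
  · exact (funext (hκ · a) : mapOfLE _ ∘ conj = a.1.conj) ▸ a.1.continuous_conj
  · exact (congrArg (QuotientGroup.lift _ α _) (hℓ g ⟨a₀, ha₀⟩)).trans (a₀.lift_spec g)
  · exact (congrArg (QuotientGroup.lift _ α _) (hκ x ⟨a₀, ha₀⟩)).trans (a₀.conj_mem_ker x)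
  · exact eq_of_mapOfLE_iInf_eq N fun a => by
      simpa [lift, conj, hℓ, hκ] using a.1.conj_lift_conj x s hs
  · exact ⟨iInf_le N ⟨a, ha⟩, MonoidHom.ext fun g => hℓ g ⟨a, ha⟩, funext fun x => hκ x ⟨a, ha⟩⟩

variable [TotallyDisconnectedSpace H] [TopologicalSpace Q]

theorem exists_le_of_finite_ker (hfin : HasFiniteKernelLiftings S)
    (hP : IsLiftingProblem S α φ σ) (m : PartialSolution S α φ σ) (M : Subgroup H) [M.Normal]
    [IsClosed (M : Set H)] (hMN : M ≤ m.N) [Finite (mapOfLE hMN).ker] :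
    ∃ m' : PartialSolution S α φ σ, m ≤ m' ∧ m'.N = M := by
  obtain ⟨-, -, -, hσc, hσmul, -⟩ := hP
  let p := mapOfLE hMN
  have hp : Continuous p := continuous_mapOfLE hMN
  have hps : Function.Surjective p := fun y => induction_on y fun h => ⟨h, rfl⟩
  have := totallyDisconnectedSpace M
  have := totallyDisconnectedSpace m.N
  obtain ⟨sec, hsec, hpsec⟩ := exists_continuous_section_of_finite_ker p hp hps
  let d := sec ∘ m.conj
  have hpd (x : X) : p (d x) = m.conj x := hpsec _
  have hP' := isLiftingProblem_conj hp hps m.continuous_lift (τ := fun z => (σ z : H ⧸ M))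
    (continuous_mk.comp hσc) (fun x s s' hs hs' => by rw [hσmul x s s' hs hs', mk_mul])
    (hsec.comp m.continuous_conj) fun x s hs => by rw [hpd, m.conj_lift_conj]; rfl
  obtain ⟨ψ, c, hψ, hpψ, hc, hcker, hconj⟩ := hfin _ _ p m.lift _ hP' inferInstance
  have hpdc (x : X) : p (d x * c x) = m.conj x := by rw [map_mul, hpd, hcker x, mul_one]
  refine ⟨⟨M, hMN.trans m.le_ker, ψ, d * c, hψ, (hsec.comp m.continuous_conj).mul hc,
    fun g => ?_, fun x => ?_, fun x s hs => ?_⟩, ⟨hMN, MonoidHom.ext hpψ, funext hpdc⟩, rfl⟩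
  · rw [← lift_mapOfLE α hMN m.le_ker, hpψ, m.lift_spec]
  · rw [← lift_mapOfLE α hMN m.le_ker, Pi.mul_apply, hpdc, m.conj_mem_ker]
  · have hcψ : c x * ψ s * (c x)⁻¹ = (d x)⁻¹ * σ ⟨(s, x), hs⟩ * d x := hconj x s hs
    calc d x * c x * ψ s * (d x * c x)⁻¹ = d x * (c x * ψ s * (c x)⁻¹) * (d x)⁻¹ := by group
      _ = σ ⟨(s, x), hs⟩ := by rw [hcψ]; group

theorem exists_le_inf_openNormalSubgroup (hfin : HasFiniteKernelLiftings S)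
    (hP : IsLiftingProblem S α φ σ) (m : PartialSolution S α φ σ) (U : OpenNormalSubgroup H) :
    ∃ m' : PartialSolution S α φ σ, m ≤ m' ∧ m'.N = m.N ⊓ U.toSubgroup := by
  have : IsClosed ((m.N ⊓ U.toSubgroup : Subgroup H) : Set H) :=
    m.isClosed.inter U.toOpenSubgroup.isClosed
  have := finite_ker_mapOfLE_inf m.N U
  exact exists_le_of_finite_ker hfin hP m _ inf_le_left

end PartialSolution

end LiftingProblem

theorem arbitrary_kernel_lifting_general
    (G : Type) [Group G] [TopologicalSpace G]
    (X : Type) [TopologicalSpace X]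
    (S : X → Subgroup G)
    (hfin : ∀ (H Q : Type) [Group H] [TopologicalSpace H] [IsTopologicalGroup H]
        [CompactSpace H] [T2Space H] [TotallyDisconnectedSpace H]
        [Group Q] [TopologicalSpace Q] [IsTopologicalGroup Q]
        [CompactSpace Q] [T2Space Q] [TotallyDisconnectedSpace Q]
        (α : H →* Q) (φ : G →* Q) (σ : SheafSpace S → H),
        IsLiftingProblem S α φ σ → Finite α.ker →
        HasSolution S α φ σ) :
    ∀ (H Q : Type) [Group H] [TopologicalSpace H] [IsTopologicalGroup H]
        [CompactSpace H] [T2Space H] [TotallyDisconnectedSpace H]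
        [Group Q] [TopologicalSpace Q] [IsTopologicalGroup Q]
        [CompactSpace Q] [T2Space Q] [TotallyDisconnectedSpace Q]
        (α : H →* Q) (φ : G →* Q) (σ : SheafSpace S → H),
      IsLiftingProblem S α φ σ → HasSolution S α φ σ := by
  intro H Q _ _ _ _ _ _ _ _ _ _ _ _ α φ σ hP
  have := PartialSolution.nonempty hP
  obtain ⟨m, hm⟩ :=
    zorn_le_nonempty (α := PartialSolution S α φ σ) PartialSolution.bddAbove_of_isChain
  refine m.hasSolution_of_N_eq_bot (m.N.eq_bot_of_forall_le_openNormalSubgroup fun U => ?_)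
  obtain ⟨m', hmm', hN⟩ := m.exists_le_inf_openNormalSubgroup hfin hP U
  obtain ⟨hle, -⟩ := hm hmm'
  exact hle.trans (hN ▸ inf_le_right)

/-- Let `(G,𝒮)` be a profinite group pair. If every lifting problem of `G`
relative to `𝒮` with finite kernel has a solution, then every lifting problem of `G`
relative to `𝒮` (with arbitrary closed kernel) has a solution. -/
theorem arbitrary_kernel_lifting
    (G : Type) [Group G] [TopologicalSpace G] [IsTopologicalGroup G]
    [CompactSpace G] [T2Space G] [TotallyDisconnectedSpace G]
    (X : Type) [TopologicalSpace X] [CompactSpace X] [T2Space X]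
    [TotallyDisconnectedSpace X]
    (S : X → Subgroup G) (hclosed : ∀ x, IsClosed (S x : Set G))
    (hidx : IsClosed {gx : G × X | gx.1 ∈ S gx.2})
    (hfin : ∀ (H Q : Type) [Group H] [TopologicalSpace H] [IsTopologicalGroup H]
        [CompactSpace H] [T2Space H] [TotallyDisconnectedSpace H]
        [Group Q] [TopologicalSpace Q] [IsTopologicalGroup Q]
        [CompactSpace Q] [T2Space Q] [TotallyDisconnectedSpace Q]
        (α : H →* Q) (φ : G →* Q) (σ : SheafSpace S → H),
        IsLiftingProblem S α φ σ → Finite α.ker →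
        HasSolution S α φ σ) :
    ∀ (H Q : Type) [Group H] [TopologicalSpace H] [IsTopologicalGroup H]
        [CompactSpace H] [T2Space H] [TotallyDisconnectedSpace H]
        [Group Q] [TopologicalSpace Q] [IsTopologicalGroup Q]
        [CompactSpace Q] [T2Space Q] [TotallyDisconnectedSpace Q]
        (α : H →* Q) (φ : G →* Q) (σ : SheafSpace S → H),
      IsLiftingProblem S α φ σ → HasSolution S α φ σ :=
  arbitrary_kernel_lifting_general G X S hfin
end

section
/- Let (G,𝒮) be a profinite group pair and consider a lifting problem of G relative to 𝒮 given by a continuous surjection α : H → Q of profinite groups with finite abelian kernel A, a continuous homomorphism φ : G → Q, and a continuous map σ : 𝒮 → H as in the definition. Regard A as a G-module via g·a = h a h^{-1} for any h ∈ H with α(h) = φ(g) (this is well defined since A is abelian and normal in H). Let E = {(g,h) ∈ G × H : φ(g) = α(h)} be the pullback, an extension of G by A via a ↦ (1,a) and p(g,h) = g, and let q : 𝒮 → E be q(s,x) = (s, σ(s,x)). Then the lifting problem has a solution if and only if the relative extension (E,q) is equivalent to the trivial relative extension (A ⋊ G with q₀(s,x) = (0,s)); that is, if and only if there exist a continuous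 isomorphism f : E → A ⋊ G commuting with the inclusions of A and the projections to G, and a continuous map a : X → A, such that (0,s) = a(x)·f(q(s,x))·a(x)^{-1} in A ⋊ G for all x ∈ X and s ∈ S_x. -/
/-- The pullback of `φ : G → Q` and `α : H → Q`, as a subgroup of `G × H`:
`E = {(g,h) | φ g = α h}`. -/
def pullbackSubgroup {G H Q : Type} [Group G] [Group H] [Group Q]
    (φ : G →* Q) (α : H →* Q) : Subgroup (G × H) where
  carrier := {x : G × H | φ x.1 = α x.2}
  one_mem' := by simp
  mul_mem' := by
    intro a b ha hb
    simp only [Set.mem_setOf_eq, Prod.fst_mul, Prod.snd_mul, map_mul] at *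
    rw [ha, hb]
  inv_mem' := by
    intro a ha
    simp only [Set.mem_setOf_eq, Prod.fst_inv, Prod.snd_inv, map_inv] at *
    rw [ha]

lemma mem_pullbackSubgroup {G H Q : Type} [Group G] [Group H] [Group Q]
    (φ : G →* Q) (α : H →* Q) (x : G × H) :
    x ∈ pullbackSubgroup φ α ↔ φ x.1 = α x.2 := Iff.rfl

/-- The product topology on a semidirect product of topological groups. -/
def sdpTopology {N G : Type} [Group N] [Group G] [TopologicalSpace N] [TopologicalSpace G]
    (ρ : G →* MulAut N) : TopologicalSpace (N ⋊[ρ] G) :=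
  TopologicalSpace.induced (fun e => (e.left, e.right)) inferInstance

/-!
A continuous lift `φ̄ : G → H` of `φ` is the same thing as a continuous splitting `g ↦ (g, φ̄ g)`
of the pullback `E → G`, and such a splitting identifies `E` with `A ⋊ G` through
`(g, h) ↦ (h φ̄(g)⁻¹, g)`. Conversely an equivalence `f : E ≅ A ⋊ G` of extensions yields the lift
`φ̄ = pr_H ∘ f⁻¹ ∘ inr`, which is continuous because `E` is compact and `A ⋊ G` is Hausdorff.
Under this dictionary, conjugating `q(s,x) = (s, σ(s,x))` to `inr s` by `a(x) ∈ A` is the same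
as conjugating `φ̄` to `σ(·,x)` by `c(x) = a(x)⁻¹`.
-/

open SemidirectProduct

section SemidirectTopology

variable {N G : Type} [Group N] [Group G] [TopologicalSpace N] [TopologicalSpace G]
  {ρ : G →* MulAut N}

attribute [local instance] sdpTopology

lemma continuous_sdpTopology_iff {Y : Type} [TopologicalSpace Y] {f : Y → N ⋊[ρ] G} :
    Continuous f ↔ Continuous fun y => ((f y).left, (f y).right) :=
  continuous_induced_rng

lemma continuous_inr_sdpTopology : Continuous (inr : G → N ⋊[ρ] G) :=
  continuous_sdpTopology_iff.mpr (continuous_const.prodMk continuous_id)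

lemma t2Space_sdpTopology [T2Space N] [T2Space G] : T2Space (N ⋊[ρ] G) :=
  Topology.IsEmbedding.t2Space ⟨⟨rfl⟩, equivProd.injective⟩

end SemidirectTopology

section Pullback

variable {G H Q : Type} [Group G] [Group H] [Group Q] {φ : G →* Q} {α : H →* Q}

def pullbackInl : α.ker →* pullbackSubgroup φ α where
  toFun a := ⟨(1, a), by simp [mem_pullbackSubgroup, MonoidHom.mem_ker.mp a.2]⟩
  map_one' := rfl
  map_mul' a b := Subtype.ext (Prod.ext (one_mul 1).symm rfl)

lemma isClosed_pullbackSubgroup [TopologicalSpace G] [TopologicalSpace H] [TopologicalSpace Q]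
    [T2Space Q] (hφ : Continuous φ) (hα : Continuous α) :
    IsClosed (pullbackSubgroup φ α : Set (G × H)) :=
  isClosed_eq (hφ.comp continuous_fst) (hα.comp continuous_snd)

lemma mul_inv_lift_mem_ker {φbar : G →* H} (hlift : ∀ g, α (φbar g) = φ g)
    (e : pullbackSubgroup φ α) : (e : G × H).2 * (φbar (e : G × H).1)⁻¹ ∈ α.ker := by
  rw [MonoidHom.mem_ker, map_mul, map_inv, hlift, e.2, mul_inv_cancel]

variable (ρ : G →* MulAut α.ker)

section OfLift

variable (φbar : G →* H) (hlift : ∀ g, α (φbar g) = φ g)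
  (hρ : ∀ g a, (ρ g a : H) = φbar g * a * (φbar g)⁻¹)

def pullbackEquivOfLift : pullbackSubgroup φ α ≃* α.ker ⋊[ρ] G where
  toFun e := ⟨⟨_, mul_inv_lift_mem_ker hlift e⟩, (e : G × H).1⟩
  invFun p := ⟨(p.right, p.left * φbar p.right), by
    rw [mem_pullbackSubgroup, map_mul, MonoidHom.mem_ker.mp p.left.2, one_mul, hlift]⟩
  left_inv e := Subtype.ext (Prod.ext rfl (inv_mul_cancel_right _ _))
  right_inv p := SemidirectProduct.ext (Subtype.ext (mul_inv_cancel_right _ _)) rfl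
  map_mul' a b := by
    refine SemidirectProduct.ext (Subtype.ext ?_) rfl
    simp only [mul_left, Subgroup.coe_mul, hρ, Prod.fst_mul, Prod.snd_mul,
      map_mul, mul_inv_rev]
    group

variable {φbar hlift hρ}

lemma pullbackEquivOfLift_left (e : pullbackSubgroup φ α) :
    ((pullbackEquivOfLift ρ φbar hlift hρ e).left : H) =
      (e : G × H).2 * (φbar (e : G × H).1)⁻¹ := rfl

lemma pullbackEquivOfLift_right (e : pullbackSubgroup φ α) :
    (pullbackEquivOfLift ρ φbar hlift hρ e).right = (e : G × H).1 := rfl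

lemma pullbackEquivOfLift_pullbackInl (a : α.ker) :
    pullbackEquivOfLift ρ φbar hlift hρ (pullbackInl a) = inl a :=
  SemidirectProduct.ext (Subtype.ext (by simp [pullbackEquivOfLift_left, pullbackInl])) rfl

lemma continuous_pullbackEquivOfLift [TopologicalSpace G] [TopologicalSpace H]
    [IsTopologicalGroup H] (hφbar : Continuous φbar) :
    @Continuous _ _ _ (sdpTopology ρ) (pullbackEquivOfLift ρ φbar hlift hρ) := by
  refine continuous_sdpTopology_iff.mpr (Continuous.prodMk ?_ ?_)
  · exact ((continuous_snd.comp continuous_subtype_val).mul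
      (hφbar.comp (continuous_fst.comp continuous_subtype_val)).inv).subtype_mk _
  · exact continuous_fst.comp continuous_subtype_val

lemma inr_eq_conj_pullbackEquivOfLift (c : α.ker) (e : pullbackSubgroup φ α)
    (he : (e : G × H).2 = c * φbar (e : G × H).1 * c⁻¹) :
    inr (e : G × H).1 =
      inl c⁻¹ * pullbackEquivOfLift ρ φbar hlift hρ e * (inl c⁻¹)⁻¹ := by
  refine SemidirectProduct.ext (Subtype.ext ?_) ?_
  · simp only [left_inr, mul_left, inv_left, left_inl, right_inl, mul_right,
      pullbackEquivOfLift_right, Subgroup.coe_mul, Subgroup.coe_inv, hρ,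
      pullbackEquivOfLift_left, he, map_one, inv_one, MulAut.one_apply, one_mul,
      OneMemClass.coe_one]
    group
  · simp [pullbackEquivOfLift_right]

end OfLift

section OfEquiv

variable {ρ} (F : pullbackSubgroup φ α ≃* α.ker ⋊[ρ] G)

def liftOfPullbackEquiv : G →* H :=
  (MonoidHom.snd G H).comp ((pullbackSubgroup φ α).subtype.comp (F.symm.toMonoidHom.comp inr))

lemma liftOfPullbackEquiv_apply (g : G) :
    liftOfPullbackEquiv F g = (F.symm (inr g) : G × H).2 := rfl

lemma map_liftOfPullbackEquiv (hF : ∀ e, (F e).right = (e : G × H).1) (g : G) :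
    α (liftOfPullbackEquiv F g) = φ g := by
  have hfst : (F.symm (inr g) : G × H).1 = g := by
    rw [← hF, F.apply_symm_apply, right_inr]
  rw [liftOfPullbackEquiv_apply, ← (F.symm (inr g)).2, hfst]

lemma continuous_liftOfPullbackEquiv [TopologicalSpace G] [TopologicalSpace H]
    [TopologicalSpace Q] [CompactSpace G] [CompactSpace H] [T2Space G] [T2Space H] [T2Space Q]
    (hφ : Continuous φ) (hα : Continuous α) (hF : @Continuous _ _ _ (sdpTopology ρ) F) :
    Continuous (liftOfPullbackEquiv F) := by
  let _ := sdpTopology ρ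
  have := t2Space_sdpTopology (N := α.ker) (ρ := ρ)
  have : CompactSpace (pullbackSubgroup φ α) :=
    isCompact_iff_compactSpace.mp (isClosed_pullbackSubgroup hφ hα).isCompact
  have hsymm : Continuous F.symm :=
    Continuous.continuous_symm_of_equiv_compact_to_t2 (f := F.toEquiv) hF
  exact continuous_snd.comp (continuous_subtype_val.comp (hsymm.comp continuous_inr_sdpTopology))

lemma liftOfPullbackEquiv_eq_conj (hinl : ∀ a, F (pullbackInl a) = inl a) (a : α.ker)
    (e : pullbackSubgroup φ α) (he : inr (e : G × H).1 = inl a * F e * (inl a)⁻¹) :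
    liftOfPullbackEquiv F (e : G × H).1 = a * (e : G × H).2 * (a : H)⁻¹ := by
  have hsymm : F.symm (inr (e : G × H).1) = pullbackInl a * e * (pullbackInl a)⁻¹ := by
    rw [MulEquiv.symm_apply_eq, map_mul, map_mul, map_inv, hinl, he]
  rw [liftOfPullbackEquiv_apply, hsymm]
  rfl

end OfEquiv

end Pullback

/-- Let `(G,𝒮)` be a profinite group pair and consider a lifting problem
`(α : H → Q, φ : G → Q, σ : 𝒮 → H)` with finite abelian kernel `A = ker α`, the
`G`-action `ρ` on `A` being induced by conjugation by preimages (`hρ`).  Let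
`E = {(g,h) | φ g = α h}` be the pullback extension of `G` by `A`, with relative sections
`q (s,x) = (s, σ (s,x))`.  Then the lifting problem has a solution if and only if `(E,q)`
is equivalent to the trivial relative extension `A ⋊[ρ] G` (with its product topology):
there exist a continuous equivalence of extensions `f : E → A ⋊[ρ] G` and a continuous
map `a : X → A` with `inr s = a x * f (q (s,x)) * (a x)⁻¹` for all `x ∈ X`, `s ∈ S x`. -/
theorem lifting_solution_iff_trivial_relative_extension
    (G : Type) [Group G] [TopologicalSpace G] [CompactSpace G] [T2Space G]
    (X : Type) [TopologicalSpace X]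
    (S : X → Subgroup G)
    (H Q : Type) [Group H] [TopologicalSpace H] [IsTopologicalGroup H]
    [CompactSpace H] [T2Space H]
    [Group Q] [TopologicalSpace Q] [T2Space Q]
    (α : H →* Q) (hαc : Continuous α)
    (φ : G →* Q) (hφc : Continuous φ)
    (σ : {gx : G × X // gx.1 ∈ S gx.2} → H)
    (hσα : ∀ (x : X) (s : G) (hs : s ∈ S x), α (σ ⟨(s, x), hs⟩) = φ s)
    (ρ : G →* MulAut α.ker)
    (hρ : ∀ (g : G) (a : α.ker) (h : H), α h = φ g → ((ρ g a : α.ker) : H) = h * ↑a * h⁻¹) :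
    (∃ (φbar : G →* H) (c : X → H),
      Continuous φbar ∧ (∀ g, α (φbar g) = φ g) ∧
      Continuous c ∧ (∀ x, c x ∈ α.ker) ∧
      ∀ (x : X) (s : G) (hs : s ∈ S x), c x * φbar s * (c x)⁻¹ = σ ⟨(s, x), hs⟩)
    ↔
    (∃ f : pullbackSubgroup φ α →* α.ker ⋊[ρ] G,
      @Continuous _ _ _ (sdpTopology ρ) f ∧
      Function.Bijective f ∧
      (∀ a : α.ker, f ⟨((1 : G), (a : H)),
          (mem_pullbackSubgroup φ α _).mpr (by
            show φ 1 = α ↑a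
            rw [map_one, MonoidHom.mem_ker.mp a.2])⟩ = SemidirectProduct.inl a) ∧
      (∀ e : pullbackSubgroup φ α, (f e).right = (e : G × H).1) ∧
      ∃ aa : X → α.ker, Continuous aa ∧
        ∀ (x : X) (s : G) (hs : s ∈ S x),
          SemidirectProduct.inr s =
            SemidirectProduct.inl (aa x) *
              f ⟨(s, σ ⟨(s, x), hs⟩),
                (mem_pullbackSubgroup φ α _).mpr (hσα x s hs).symm⟩ *
              (SemidirectProduct.inl (aa x))⁻¹) := by
  constructor
  · rintro ⟨φbar, c, hφbarc, hlift, hcc, hcker, hconj⟩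
    let F := pullbackEquivOfLift ρ φbar hlift fun g a => hρ g a _ (hlift g)
    let c' : X → α.ker := fun x => ⟨c x, hcker x⟩
    refine ⟨F.toMonoidHom, continuous_pullbackEquivOfLift ρ hφbarc, F.bijective,
      pullbackEquivOfLift_pullbackInl ρ, pullbackEquivOfLift_right ρ, fun x => (c' x)⁻¹,
      (hcc.subtype_mk hcker).inv, fun x s hs => ?_⟩
    exact inr_eq_conj_pullbackEquivOfLift ρ (c' x) ⟨(s, σ ⟨(s, x), hs⟩), (hσα x s hs).symm⟩
      (hconj x s hs).symm
  · rintro ⟨f, hfc, hfb, hinl, hright, aa, haac, haa⟩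
    let F := MulEquiv.ofBijective f hfb
    refine ⟨liftOfPullbackEquiv F, fun x => (aa x : H)⁻¹,
      continuous_liftOfPullbackEquiv F hφc hαc hfc, map_liftOfPullbackEquiv F hright,
      (continuous_subtype_val.comp haac).inv, fun x => inv_mem (aa x).2, fun x s hs => ?_⟩
    have hlift_conj : liftOfPullbackEquiv F s = aa x * σ ⟨(s, x), hs⟩ * (aa x : H)⁻¹ :=
      liftOfPullbackEquiv_eq_conj F hinl (aa x) ⟨(s, σ ⟨(s, x), hs⟩), (hσα x s hs).symm⟩
        (haa x s hs)
    rw [hlift_conj]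
    group
end

section
/- Let G be a profinite group and let 𝒮 = {S_x}_{x∈X} be a family of closed subgroups of G continuously indexed by a profinite space X. Let U be an open normal subgroup of G. Then there is a finite partition {A_y : y ∈ Y} of X into clopen sets such that for each y ∈ Y there exists x ∈ A_y with S_{x'} ⊆ S_x U for all x' ∈ A_y. -/
/-!
Pass to the finite quotient `G ⧸ U`: with `f x` the image of `S x` there, `S x' ⊆ S x * U` iff
`f x' ⊆ f x`, and the closed graph of the family makes `{x | f x ⊆ T}` open and `{x | T ⊆ f x}`
closed. For such an `f` with values in a finite poset, clopen pieces are cut off one at a time: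
on what is left, take `x₀` with `f x₀` maximal; then `{x | f x₀ ≤ f x}` is closed and lies in the
open set `{x | f x ≤ f x₀}`, a clopen set in between is a piece with centre `x₀`, and the rest
takes strictly fewer values.
-/

open Pointwise

theorem IsLocallyConstant.piecewise_of_isClopen {X Y : Type*} [TopologicalSpace X] {s : Set X}
    [DecidablePred (· ∈ s)] (hs : IsClopen s) {f g : X → Y} (hf : IsLocallyConstant f)
    (hg : IsLocallyConstant g) : IsLocallyConstant (s.piecewise f g) := by
  rw [IsLocallyConstant.iff_eventually_eq]
  intro x
  by_cases hx : x ∈ s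
  · filter_upwards [hs.isOpen.mem_nhds hx, hf.eventually_eq x] with y hy hfy
    simp [Set.piecewise, hx, hy, hfy]
  · filter_upwards [hs.isClosed.isOpen_compl.mem_nhds hx, hg.eventually_eq x] with y hy hgy
    simp_all [Set.piecewise]

universe u

section

variable {X : Type u} {β : Type*} [TopologicalSpace X] [CompactSpace X] [T2Space X]
  [TotallyDisconnectedSpace X] [PartialOrder β] [Finite β] {f : X → β}

theorem exists_isLocallyConstant_retraction_le (hle : ∀ b, IsOpen {x | f x ≤ b})
    (hge : ∀ b, IsClosed {x | b ≤ f x}) {B : Set X} (hB : IsClopen B) :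
    ∃ c : X → X, IsLocallyConstant c ∧
      ∀ x ∈ B, c x ∈ B ∧ c (c x) = c x ∧ f x ≤ f (c x) := by
  classical
  induction hs : f '' B using WellFoundedLT.induction generalizing B with
  | ind s ih =>
    rcases B.eq_empty_or_nonempty with rfl | hBne
    · rcases isEmpty_or_nonempty X with hX | ⟨⟨x⟩⟩
      · exact ⟨id, .of_constant _ fun a => isEmptyElim a, fun a => isEmptyElim a⟩
      · exact ⟨fun _ => x, .const x, by simp⟩
    obtain ⟨_, ⟨x₀, hx₀B, rfl⟩, hmax⟩ :=
      (Set.toFinite (f '' B)).exists_maximal (hBne.image f)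
    have hFO : B ∩ {x | f x₀ ≤ f x} ⊆ B ∩ {x | f x ≤ f x₀} :=
      fun x ⟨hxB, hx⟩ => ⟨hxB, hmax ⟨x, hxB, rfl⟩ hx⟩
    obtain ⟨K, hK, hFK, hKO⟩ := exists_clopen_of_closed_subset_open
      (hB.isClosed.inter (hge _)) (hB.isOpen.inter (hle _)) hFO
    have hx₀K : x₀ ∈ K := hFK ⟨hx₀B, le_rfl⟩
    have hlt : f '' (B \ K) < s := by
      rw [← hs]
      refine Set.ssubset_iff_subset_ne.2 ⟨Set.image_mono Set.sdiff_subset, fun h => ?_⟩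
      obtain ⟨x, ⟨hxB, hxK⟩, hx⟩ := h.symm ▸ Set.mem_image_of_mem f hx₀B
      exact hxK (hFK ⟨hxB, hx.ge⟩)
    obtain ⟨c, hc, hcB⟩ := ih _ hlt (hB.diff hK) rfl
    refine ⟨K.piecewise (fun _ => x₀) c,
      IsLocallyConstant.piecewise_of_isClopen hK (.const x₀) hc, ?_⟩
    intro x hxB
    by_cases hxK : x ∈ K
    · simpa [hxK, hx₀K, hx₀B] using (hKO hxK).2
    · obtain ⟨⟨hcxB, hcxK⟩, hcc, hfc⟩ := hcB x ⟨hxB, hxK⟩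
      simp [hxK, hcxK, hcxB, hcc, hfc]

theorem exists_finite_clopen_partition_le_center (hle : ∀ b, IsOpen {x | f x ≤ b})
    (hge : ∀ b, IsClosed {x | b ≤ f x}) :
    ∃ (Y : Type u) (_ : Finite Y) (A : Y → Set X), (∀ y, IsClopen (A y)) ∧
      (∀ x : X, ∃! y : Y, x ∈ A y) ∧ (∀ y, ∃ x ∈ A y, ∀ x' ∈ A y, f x' ≤ f x) := by
  obtain ⟨c, hc, hcenter⟩ := exists_isLocallyConstant_retraction_le hle hge isClopen_univ
  refine ⟨Set.range c, hc.range_finite.to_subtype, fun y => c ⁻¹' {y.1},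
    fun y => hc.isClopen_fiber y.1, fun x => ⟨⟨c x, x, rfl⟩, rfl, ?_⟩, ?_⟩
  · rintro y hy
    exact Subtype.ext hy.symm
  · rintro ⟨_, x, rfl⟩
    obtain ⟨-, hcc, -⟩ := hcenter x trivial
    exact ⟨c x, hcc, fun x' (hx' : c x' = c x) => hx' ▸ (hcenter x' trivial).2.2⟩

end

section

variable {G X : Type*} [TopologicalSpace G] [CompactSpace G] [TopologicalSpace X]
  {S : X → Set G}

theorem isClosed_setOf_inter_nonempty (hS : IsClosed {p : G × X | p.1 ∈ S p.2}) {C : Set G}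
    (hC : IsClosed C) : IsClosed {x | (S x ∩ C).Nonempty} := by
  have : {x | (S x ∩ C).Nonempty} =
      Prod.snd '' ({p : G × X | p.1 ∈ S p.2} ∩ Prod.fst ⁻¹' C) := by
    ext x
    simp [Set.Nonempty, and_comm]
  rw [this]
  exact isClosedMap_snd_of_compactSpace _ (hS.inter (hC.preimage continuous_fst))

theorem isOpen_setOf_subset (hS : IsClosed {p : G × X | p.1 ∈ S p.2}) {C : Set G}
    (hC : IsOpen C) : IsOpen {x | S x ⊆ C} := by
  have : {x | S x ⊆ C} = {x | (S x ∩ Cᶜ).Nonempty}ᶜ := by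
    ext x
    simp [Set.subset_def, Set.Nonempty]
  exact this ▸ (isClosed_setOf_inter_nonempty hS hC.isClosed_compl).isOpen_compl

end

theorem finite_quotient_partition_general
    (G : Type) [Group G] [TopologicalSpace G] [IsTopologicalGroup G]
    [CompactSpace G]
    (X : Type) [TopologicalSpace X] [CompactSpace X] [T2Space X]
    [TotallyDisconnectedSpace X]
    (S : X → Subgroup G)
    (hidx : IsClosed {gx : G × X | gx.1 ∈ S gx.2})
    (U : Subgroup G) (hUopen : IsOpen (U : Set G)) :
    ∃ (Y : Type) (_ : Finite Y) (A : Y → Set X),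
      (∀ y, IsClopen (A y)) ∧
      (∀ x : X, ∃! y : Y, x ∈ A y) ∧
      (∀ y, ∃ x ∈ A y, ∀ x' ∈ A y, (S x' : Set G) ⊆ (S x : Set G) * (U : Set G)) := by
  have := QuotientGroup.discreteTopology hUopen
  have := Subgroup.quotient_finite_of_isOpen U hUopen
  let f : X → Set (G ⧸ U) := fun x => QuotientGroup.mk '' (S x : Set G)
  have hle : ∀ T, IsOpen {x | f x ≤ T} := fun T => by
    simpa only [f, Set.image_subset_iff] using
      isOpen_setOf_subset hidx ((isOpen_discrete T).preimage QuotientGroup.continuous_mk)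
  have hge : ∀ T, IsClosed {x | T ≤ f x} := fun T => by
    have : {x | T ≤ f x} =
        ⋂ t ∈ T, {x | ((S x : Set G) ∩ QuotientGroup.mk ⁻¹' {t}).Nonempty} := by
      ext x
      simp [f, Set.subset_def, Set.Nonempty]
    exact this ▸ isClosed_biInter fun t _ => isClosed_setOf_inter_nonempty hidx
      ((isClosed_discrete {t}).preimage QuotientGroup.continuous_mk)
  obtain ⟨Y, hY, A, hA, hcover, hcenter⟩ := exists_finite_clopen_partition_le_center hle hge
  refine ⟨Y, hY, A, hA, hcover, fun y => ?_⟩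
  obtain ⟨x, hx, hmax⟩ := hcenter y
  refine ⟨x, hx, fun x' hx' => ?_⟩
  rw [← QuotientGroup.preimage_image_mk_eq_mul, ← Set.image_subset_iff]
  exact hmax x' hx'

/-- Lemma on finite quotients of a continuously indexed family.
Let `G` be a profinite group, `{S x}_{x ∈ X}` a family of closed subgroups of `G`
continuously indexed by a profinite space `X`, and `U` an open normal subgroup of `G`.
Then there is a finite partition `{A y : y ∈ Y}` of `X` into clopen sets such that for
each `y ∈ Y` there exists `x ∈ A y` with `S x' ⊆ S x * U` for all `x' ∈ A y`. -/
theorem finite_quotient_partition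
    (G : Type) [Group G] [TopologicalSpace G] [IsTopologicalGroup G]
    [CompactSpace G] [T2Space G] [TotallyDisconnectedSpace G]
    (X : Type) [TopologicalSpace X] [CompactSpace X] [T2Space X]
    [TotallyDisconnectedSpace X]
    (S : X → Subgroup G) (hclosed : ∀ x, IsClosed (S x : Set G))
    (hidx : IsClosed {gx : G × X | gx.1 ∈ S gx.2})
    (U : Subgroup G) (hUnormal : U.Normal) (hUopen : IsOpen (U : Set G)) :
    ∃ (Y : Type) (_ : Finite Y) (A : Y → Set X),
      (∀ y, IsClopen (A y)) ∧
      (∀ x : X, ∃! y : Y, x ∈ A y) ∧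
      (∀ y, ∃ x ∈ A y, ∀ x' ∈ A y, (S x' : Set G) ⊆ (S x : Set G) * (U : Set G)) :=
  finite_quotient_partition_general G X S hidx U hUopen
end

section
/- Let G be a profinite group, let 𝒮 = {S_x}_{x∈X} be a family of closed subgroups of G continuously indexed by a profinite space X, and let f : 𝒮 → F be a continuous function to a finite discrete set F. Then there exists a finite quotient (U,𝒯,Y) of 𝒮 such that f factors through the natural map 𝒮 → 𝒯; that is, there exist an open normal subgroup U of G and a finite clopen partition {A_y}_{y∈Y} of X satisfying the conditions of a finite quotient, such that f(s,x) = f(s',x') whenever sU = s'U and x, x' lie in the same part A_y. -/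
/-!
Since `𝒮` is compact and `f` is locally constant, `f` is uniformly locally constant: for some open
normal subgroup `U` and clopen partition of `X`, `f (s, x)` depends only on `sU` and on the part
containing `x`. Because `𝒮` is closed and `G` compact, `x ↦ S_x U/U` is upper semicontinuous with
values in the finite lattice of subsets of `G/U`. The set where it attains a maximal value `T` is
closed, so it can be enclosed in a clopen set on which the value stays `⊆ T`; cutting such sets off
one at a time refines the partition into parts, each containing a point `x` with `S_x U` largest.
-/

universe u

open Pointwise Topology Filter

section Group

variable {G X : Type*} [Group G] [TopologicalSpace G] [IsTopologicalGroup G] [CompactSpace G]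
  [TotallyDisconnectedSpace G] [TopologicalSpace X] [CompactSpace X] [T2Space X]
  [TotallyDisconnectedSpace X]

theorem hasBasis_nhds_prod_openNormalSubgroup_discreteQuotient (g : G) (x : X) :
    (𝓝 (g, x)).HasBasis (fun _ : OpenNormalSubgroup G × DiscreteQuotient X => True)
      fun VQ => {p | g⁻¹ * p.1 ∈ VQ.1 ∧ VQ.2.proj p.2 = VQ.2.proj x} := by
  refine ⟨fun N => ⟨fun hN => ?_, fun ⟨⟨V, Q⟩, _, hsub⟩ => mem_of_superset ?_ hsub⟩⟩
  · obtain ⟨N₁, hN₁, N₂, hN₂, hprod⟩ := mem_nhds_prod_iff.1 hN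
    obtain ⟨O₁, hO₁N, hO₁, hgO₁⟩ := mem_nhds_iff.1 hN₁
    obtain ⟨O₂, hO₂N, hO₂, hxO₂⟩ := mem_nhds_iff.1 hN₂
    obtain ⟨V, hV⟩ := ProfiniteGrp.exist_openNormalSubgroup_sub_open_nhds_of_one
      (hO₁.preimage (continuous_const_mul g)) (by simpa using hgO₁)
    obtain ⟨W, hW, hxW, hWO₂⟩ := compact_exists_isClopen_in_isOpen hO₂ hxO₂
    refine ⟨⟨V, DiscreteQuotient.ofIsClopen hW⟩, trivial, fun p ⟨hp₁, hp₂⟩ => hprod ⟨?_, ?_⟩⟩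
    · simpa using hO₁N (hV hp₁)
    · exact hO₂N (hWO₂ ((Quotient.eq''.1 hp₂).2 hxW))
  · refine prod_mem_nhds (s := {h : G | g⁻¹ * h ∈ V}) ?_
      (Q.proj_isLocallyConstant.eventually_eq x)
    exact (continuous_const_mul g⁻¹).continuousAt.preimage_mem_nhds
      (by rw [inv_mul_cancel]; exact V.toOpenSubgroup.mem_nhds_one)

theorem IsCompact.exists_openNormalSubgroup_discreteQuotient_apply_eq {K : Set (G × X)}
    (hK : IsCompact K) {F : Type*} [TopologicalSpace F] [DiscreteTopology F] {f : K → F}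
    (hf : Continuous f) :
    ∃ (U : OpenNormalSubgroup G) (Q : DiscreteQuotient X), ∀ w w' : K,
      w.1.1⁻¹ * w'.1.1 ∈ U → Q.proj w.1.2 = Q.proj w'.1.2 → f w = f w' := by
  have : CompactSpace K := isCompact_iff_compactSpace.1 hK
  suffices h : ∃ (U : OpenNormalSubgroup G) (Q : DiscreteQuotient X), ∀ w ∈ (Set.univ : Set K),
      ∀ w' : K, w.1.1⁻¹ * w'.1.1 ∈ U → Q.proj w.1.2 = Q.proj w'.1.2 → f w = f w' by
    simpa using h
  refine isCompact_univ.induction_on ?_ ?_ ?_ ?_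
  · exact ⟨⟨⊤, (inferInstance : (⊤ : Subgroup G).Normal)⟩, ⊤, by simp⟩
  · exact fun s t hst ⟨U, Q, h⟩ => ⟨U, Q, fun w hw => h w (hst hw)⟩
  · rintro s t ⟨U₁, Q₁, h₁⟩ ⟨U₂, Q₂, h₂⟩
    refine ⟨U₁ ⊓ U₂, Q₁ ⊓ Q₂, fun w hw w' hU hQ => hw.elim (h₁ w · w' ?_ ?_) (h₂ w · w' ?_ ?_)⟩
    · exact inf_le_left (a := U₁) (b := U₂) hU
    · simpa only [DiscreteQuotient.ofLE_proj] using congrArg (DiscreteQuotient.ofLE inf_le_left) hQ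
    · exact inf_le_right (a := U₁) (b := U₂) hU
    · simpa only [DiscreteQuotient.ofLE_proj] using congrArg (DiscreteQuotient.ofLE inf_le_right) hQ
  · intro z _
    have hz : f ⁻¹' {f z} ∈ 𝓝 z := ((isOpen_discrete {f z}).preimage hf).mem_nhds rfl
    rw [nhds_subtype_eq_comap, mem_comap] at hz
    obtain ⟨N, hN, hNf⟩ := hz
    have hbasis := hasBasis_nhds_prod_openNormalSubgroup_discreteQuotient z.1.1 z.1.2
    obtain ⟨⟨V, Q⟩, -, hbox⟩ := hbasis.mem_iff.1 hN
    refine ⟨_, nhdsWithin_univ z ▸ continuous_subtype_val.continuousAt.preimage_mem_nhds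
      (hbasis.mem_of_mem (i := (V, Q)) trivial), V, Q, fun w hw w' hU hQ => ?_⟩
    -- boxes are cosets, so the box around any of its points is the box itself: no shrinking needed
    have hw' : z.1.1⁻¹ * w'.1.1 ∈ V ∧ Q.proj w'.1.2 = Q.proj z.1.2 :=
      ⟨by simpa [mul_assoc] using mul_mem hw.1 hU, hQ.symm.trans hw.2⟩
    exact (hNf (hbox hw)).trans (hNf (hbox hw')).symm

end Group

theorem IsClosed.isOpen_setOf_slice_subset {Y X : Type*} [TopologicalSpace Y] [CompactSpace Y]
    [TopologicalSpace X] {K : Set (Y × X)} (hK : IsClosed K) {O : Set Y} (hO : IsOpen O) :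
    IsOpen {x | {y | (y, x) ∈ K} ⊆ O} := by
  rw [← isClosed_compl_iff]
  convert isClosedMap_snd_of_compactSpace _ (hK.inter (hO.isClosed_compl.preimage continuous_fst))
    using 1
  ext x
  simp [Set.subset_def]

section MaximalPartition

variable {X α : Type*} [TopologicalSpace X] [Preorder α] {φ : X → α}

theorem isClosed_setOf_le_apply (hφ : ∀ a, IsOpen {x | φ x ≤ a}) (a : α) :
    IsClosed {x | a ≤ φ x} := by
  rw [← isOpen_compl_iff]
  convert isOpen_biUnion (s := {b | ¬ a ≤ b}) fun b _ => hφ b using 1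
  ext x
  simp only [Set.mem_compl_iff, Set.mem_ofPred_eq, Set.mem_iUnion, exists_prop]
  exact ⟨fun h => ⟨φ x, h, le_rfl⟩, fun ⟨b, hab, hxb⟩ h => hab (h.trans hxb)⟩

variable [CompactSpace X] [T2Space X] [TotallyDisconnectedSpace X] [Finite α]

theorem exists_isLocallyConstant_fiberwise_greatest_on (hφ : ∀ a, IsOpen {x | φ x ≤ a})
    {A : Set X} (hA : IsClopen A) :
    ∃ p : X → ℕ, IsLocallyConstant p ∧
      ∀ x ∈ A, ∃ x₀ ∈ A, p x₀ = p x ∧ ∀ x' ∈ A, p x' = p x → φ x' ≤ φ x₀ := by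
  classical
  induction hn : (φ '' A).ncard using Nat.strong_induction_on generalizing A with
  | _ n ih =>
  rcases A.eq_empty_or_nonempty with rfl | hne
  · exact ⟨0, IsLocallyConstant.const 0, by simp⟩
  obtain ⟨x₀, hx₀A, hx₀max⟩ := Set.Finite.exists_maximalFor' φ A (Set.toFinite _) hne
  obtain ⟨C, hC, hEC, hCO⟩ := exists_clopen_of_closed_subset_open
    (hA.1.inter (isClosed_setOf_le_apply hφ (φ x₀))) (hA.2.inter (hφ (φ x₀)))
    fun x hx => ⟨hx.1, hx₀max hx.1 hx.2⟩
  have hx₀C : x₀ ∈ C := hEC ⟨hx₀A, le_rfl⟩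
  have hlt : (φ '' (A \ C)).ncard < n := hn ▸ Set.ncard_lt_ncard
    ((Set.ssubset_iff_of_subset (Set.image_mono Set.sdiff_subset)).2
      ⟨φ x₀, ⟨x₀, hx₀A, rfl⟩, fun ⟨x, hx, hφx⟩ => hx.2 (hEC ⟨hx.1, hφx.ge⟩)⟩)
    (Set.toFinite _)
  obtain ⟨p, hp, hpmax⟩ := ih _ hlt (hA.diff hC) rfl
  refine ⟨fun x => if x ∈ C then 0 else p x + 1, ?_, fun x hx => ?_⟩
  · refine (IsLocallyConstant.iff_eventually_eq _).2 fun x => ?_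
    by_cases hxC : x ∈ C
    · filter_upwards [hC.isOpen.mem_nhds hxC] with y hyC
      simp [hxC, hyC]
    · filter_upwards [hC.compl.isOpen.mem_nhds hxC, hp.eventually_eq x] with y hyC hpy
      simp_all
  · by_cases hxC : x ∈ C
    · refine ⟨x₀, hx₀A, by simp [hxC, hx₀C], fun x' _ hpx' => (hCO ?_).2⟩
      by_contra hx'C
      simp [hxC, hx'C] at hpx'
    · obtain ⟨x₁, ⟨hx₁A, hx₁C⟩, hpx₁, hmax⟩ := hpmax x ⟨hx, hxC⟩
      refine ⟨x₁, hx₁A, by simp [hxC, hx₁C, hpx₁], fun x' hx' hpx' => ?_⟩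
      have hx'C : x' ∉ C := fun h => by simp [h, hxC] at hpx'
      exact hmax x' ⟨hx', hx'C⟩ (by simpa [hx'C, hxC] using hpx')

theorem IsLocallyConstant.exists_refinement_fiberwise_greatest {β : Type*} {ρ : X → β}
    (hρ : IsLocallyConstant ρ) (hφ : ∀ a, IsOpen {x | φ x ≤ a}) :
    ∃ p : X → β × ℕ, IsLocallyConstant p ∧ (∀ x, (p x).1 = ρ x) ∧
      ∀ x, ∃ x₀, p x₀ = p x ∧ ∀ x', p x' = p x → φ x' ≤ φ x₀ := by
  choose P hP hPmax using fun b =>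
    exists_isLocallyConstant_fiberwise_greatest_on hφ (hρ.isClopen_fiber b)
  refine ⟨fun x => (ρ x, P (ρ x) x), ?_, fun x => rfl, fun x => ?_⟩
  · refine (IsLocallyConstant.iff_eventually_eq _).2 fun x => ?_
    filter_upwards [hρ.eventually_eq x, (hP (ρ x)).eventually_eq x] with y hρy hPy
    simp [hρy, hPy]
  · obtain ⟨x₀, hx₀ρ : ρ x₀ = ρ x, hPx₀, hmax⟩ := hPmax (ρ x) x rfl
    refine ⟨x₀, by simp only [hx₀ρ, hPx₀], fun x' hx' => ?_⟩
    obtain ⟨hρx', hPx'⟩ : ρ x' = ρ x ∧ P (ρ x') x' = P (ρ x) x := Prod.mk.inj hx'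
    exact hmax x' hρx' (hρx' ▸ hPx')

end MaximalPartition

theorem IsLocallyConstant.exists_finite_surjective {X : Type*} {β : Type u} [TopologicalSpace X]
    [CompactSpace X] {p : X → β} (hp : IsLocallyConstant p) :
    ∃ (Y : Type u) (_ : Finite Y) (π : X → Y), Function.Surjective π ∧
      (∀ y, IsClopen (π ⁻¹' {y})) ∧ ∀ x x', π x = π x' ↔ p x = p x' := by
  refine ⟨Set.range p, hp.range_finite.to_subtype, Set.rangeFactorization p,
    Set.rangeFactorization_surjective, fun y => ?_, fun x x' => Subtype.ext_iff⟩
  convert hp.isClopen_fiber y.1 using 1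
  ext x
  simp [Subtype.ext_iff, Set.rangeFactorization]

theorem factor_through_finite_quotient_general
    (G : Type) [Group G] [TopologicalSpace G] [IsTopologicalGroup G]
    [CompactSpace G] [TotallyDisconnectedSpace G]
    (X : Type) [TopologicalSpace X] [CompactSpace X] [T2Space X]
    [TotallyDisconnectedSpace X]
    (S : X → Subgroup G)
    (hidx : IsClosed {gx : G × X | gx.1 ∈ S gx.2})
    (F : Type) [TopologicalSpace F] [DiscreteTopology F]
    (f : {gx : G × X // gx.1 ∈ S gx.2} → F) (hf : Continuous f) :
    ∃ (U : Subgroup G), U.Normal ∧ IsOpen (U : Set G) ∧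
      ∃ (Y : Type) (_ : Finite Y) (π : X → Y),
        Function.Surjective π ∧
        (∀ y, IsClopen (π ⁻¹' {y})) ∧
        (∀ y, ∃ x, π x = y ∧
          ∀ x', π x' = y → (S x' : Set G) ⊆ (S x : Set G) * (U : Set G)) ∧
        (∀ (x x' : X) (s s' : G) (hs : s ∈ S x) (hs' : s' ∈ S x'),
          s⁻¹ * s' ∈ U → π x = π x' → f ⟨(s, x), hs⟩ = f ⟨(s', x'), hs'⟩) := by
  obtain ⟨U, Q, hfU⟩ := hidx.isCompact.exists_openNormalSubgroup_discreteQuotient_apply_eq hf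
  let φ : X → Set (G ⧸ (U : Subgroup G)) := fun x => QuotientGroup.mk '' (S x : Set G)
  have hφ : ∀ T, IsOpen {x | φ x ≤ T} := fun T => by
    simp only [φ, Set.image_subset_iff]
    exact hidx.isOpen_setOf_slice_subset ((isOpen_discrete T).preimage QuotientGroup.continuous_mk)
  obtain ⟨p, hp, hpQ, hpmax⟩ := Q.proj_isLocallyConstant.exists_refinement_fiberwise_greatest hφ
  obtain ⟨Y, hY, π, hπ, hπclopen, hπp⟩ := hp.exists_finite_surjective
  refine ⟨U, inferInstance, U.isOpen', Y, hY, π, hπ, hπclopen, fun y => ?_,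
    fun x x' s s' hs hs' hss' hxx' => ?_⟩
  · obtain ⟨x, rfl⟩ := hπ y
    obtain ⟨x₀, hx₀, hmax⟩ := hpmax x
    refine ⟨x₀, (hπp x₀ x).2 hx₀, fun x' hx' => ?_⟩
    rw [← QuotientGroup.preimage_image_mk_eq_mul]
    exact Set.image_subset_iff.1 (hmax x' ((hπp x' x).1 hx'))
  · exact hfU ⟨(s, x), hs⟩ ⟨(s', x'), hs'⟩ hss' (by rw [← hpQ, ← hpQ, (hπp x x').1 hxx'])

/-- A continuous function from the sheaf space `𝒮 = {(g,x) | g ∈ S x}` of a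
continuously indexed family of closed subgroups of a profinite group `G` to a finite discrete
set factors through a finite quotient `(U, 𝒯, Y)` of `𝒮`: there is an open normal subgroup
`U ≤ G` and a finite clopen partition of `X` (encoded by a surjection `π : X → Y` onto a
finite set with clopen fibres) such that each part has a point `x` with `S x' U ⊆ S x U` for
every `x'` in the same part, and `f (s,x) = f (s',x')` whenever `sU = s'U` and `π x = π x'`. -/
theorem factor_through_finite_quotient
    (G : Type) [Group G] [TopologicalSpace G] [IsTopologicalGroup G]
    [CompactSpace G] [T2Space G] [TotallyDisconnectedSpace G]
    (X : Type) [TopologicalSpace X] [CompactSpace X] [T2Space X]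
    [TotallyDisconnectedSpace X]
    (S : X → Subgroup G) (hclosed : ∀ x, IsClosed (S x : Set G))
    (hidx : IsClosed {gx : G × X | gx.1 ∈ S gx.2})
    (F : Type) [Finite F] [TopologicalSpace F] [DiscreteTopology F]
    (f : {gx : G × X // gx.1 ∈ S gx.2} → F) (hf : Continuous f) :
    ∃ (U : Subgroup G), U.Normal ∧ IsOpen (U : Set G) ∧
      ∃ (Y : Type) (_ : Finite Y) (π : X → Y),
        Function.Surjective π ∧
        (∀ y, IsClopen (π ⁻¹' {y})) ∧
        (∀ y, ∃ x, π x = y ∧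
          ∀ x', π x' = y → (S x' : Set G) ⊆ (S x : Set G) * (U : Set G)) ∧
        (∀ (x x' : X) (s s' : G) (hs : s ∈ S x) (hs' : s' ∈ S x'),
          s⁻¹ * s' ∈ U → π x = π x' → f ⟨(s, x), hs⟩ = f ⟨(s', x'), hs'⟩) :=
  factor_through_finite_quotient_general G X S hidx F f hf
end

section
/- Let (G,𝒮) be a profinite group pair, let A be a finite abelian group with an action of G, and let 0 → A → E →^p G → 1 be a continuous extension of G by A (E a profinite group, p a continuous surjection with kernel A, the conjugation action of E on A inducing the given G-action). Let q : 𝒮 → E be a continuous map such that for each x ∈ X the map s ↦ q(s,x) is a homomorphism S_x → E with p(q(s,x)) = s, and let r : G → E be a continuous set-theoretic section of p with r(1) = 1. Define ζ : G × G → A by ζ(g₁,g₂) = r(g₁)r(g₂)r(g₁g₂)^{-1} and κ : 𝒮 → A by κ(s,x) = r(s)q(s,x)^{-1}. Then ζ and κ are continuous, and there exists a finite quotient (U,𝒯,Y) of 𝒮 such that ζ factors through the quotient map G × G → G/U × G/U and κ factors through the natural map 𝒮 → 𝒯. -/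
open Pointwise

/-!
Since `p ∘ ζ` and `p ∘ κ` are trivial, `ζ` and `κ` take values in the finite group `ker p`, so
they are locally constant. By compactness, local constancy becomes constancy on finitely many
boxes, `g₁N × g₂N` for `ζ` and `gN × C` for `κ`, with `N` open normal and `C` clopen; an open
normal subgroup inside all these `N` is `U`, and the `C` generate a discrete quotient `D₀` of `X`.

It remains to refine `D₀` to a partition whose pieces each contain a point `x₀` with
`S_{x'}U/U ⊆ S_{x₀}U/U` for every `x'` of the piece. The map `x ↦ S_xU/U` is upper
semicontinuous (`{x | c ∈ S_xU/U}` is closed because `𝒮` is closed and `G` compact). Hence, in a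
clopen set, the points whose image equals a maximal one form a closed set inside the open set of
points with smaller image; a clopen set in between is split off, and induction on the number of
images that occur finishes the partition.
-/

theorem Continuous.isLocallyConstant_of_forall_mem {Y E : Type*} [TopologicalSpace Y]
    [TopologicalSpace E] [T1Space E] {f : Y → E} (hf : Continuous f) {K : Set E}
    (hK : K.Finite) (hfK : ∀ y, f y ∈ K) : IsLocallyConstant f := by
  have := hK.to_subtype
  exact ((IsLocallyConstant.iff_continuous _).2 (hf.subtype_mk hfK)).comp Subtype.val

theorem IsClopen.isLocallyConstant_ite {X Y : Type*} [TopologicalSpace X] {C : Set X}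
    [DecidablePred (· ∈ C)] (hC : IsClopen C) {f g : X → Y} (hf : IsLocallyConstant f)
    (hg : IsLocallyConstant g) : IsLocallyConstant fun x => if x ∈ C then f x else g x := by
  refine (IsLocallyConstant.iff_eventually_eq _).2 fun x => ?_
  by_cases hx : x ∈ C
  · filter_upwards [hC.isOpen.mem_nhds hx, hf.eventually_eq x] with y hy hfy
    simp [hx, hy, hfy]
  · filter_upwards [hC.compl.isOpen.mem_nhds hx, hg.eventually_eq x] with y hy hgy
    simp_all

theorem DiscreteQuotient.proj_eq_of_le {X : Type*} [TopologicalSpace X]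
    {A B : DiscreteQuotient X} (h : A ≤ B) {x y : X} (hxy : A.proj x = A.proj y) :
    B.proj x = B.proj y := by
  rw [← ofLE_proj h, hxy, ofLE_proj]

section Profinite

variable {G Z α : Type*} [Group G] [TopologicalSpace G] [IsTopologicalGroup G]
  [CompactSpace G] [TotallyDisconnectedSpace G]
  [TopologicalSpace Z] [CompactSpace Z] [T2Space Z] [TotallyDisconnectedSpace Z]

theorem exists_openNormalSubgroup_isClopen_of_isLocallyConstant {K : Set (G × Z)}
    {f : K → α} (hf : IsLocallyConstant f) (k : K) :
    ∃ (N : OpenNormalSubgroup G) (C : Set Z), IsClopen C ∧ k.1.2 ∈ C ∧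
      ∀ k' : K, k.1.1⁻¹ * k'.1.1 ∈ N → k'.1.2 ∈ C → f k' = f k := by
  obtain ⟨O, hO, hOf⟩ := isOpen_induced_iff.mp (hf.isOpen_fiber (f k))
  have hkO : k.1 ∈ O := show k ∈ Subtype.val ⁻¹' O by rw [hOf]; rfl
  obtain ⟨O₁, O₂, hO₁, hO₂, hk₁, hk₂, hO₁₂⟩ := isOpen_prod_iff.mp hO k.1.1 k.1.2 hkO
  obtain ⟨N, hN⟩ := ProfiniteGrp.exist_openNormalSubgroup_sub_open_nhds_of_one
    (hO₁.preimage (continuous_const_mul k.1.1)) (by simpa using hk₁)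
  obtain ⟨C, hC, hkC, hCO₂⟩ := compact_exists_isClopen_in_isOpen hO₂ hk₂
  refine ⟨N, C, hC, hkC, fun k' hk'N hk'C => ?_⟩
  have hk'O : k' ∈ Subtype.val ⁻¹' O := hO₁₂ ⟨by simpa using hN hk'N, hCO₂ hk'C⟩
  rwa [hOf] at hk'O

theorem exists_openNormalSubgroup_discreteQuotient_of_isLocallyConstant {K : Set (G × Z)}
    (hK : IsClosed K) {f : K → α} (hf : IsLocallyConstant f) :
    ∃ (U : OpenNormalSubgroup G) (D : DiscreteQuotient Z), ∀ k k' : K,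
      k.1.1⁻¹ * k'.1.1 ∈ U → D.proj k.1.2 = D.proj k'.1.2 → f k = f k' := by
  choose N C hC hkC hNC using exists_openNormalSubgroup_isClopen_of_isLocallyConstant hf
  have : CompactSpace K := isCompact_iff_compactSpace.mp hK.isCompact
  obtain ⟨t, ht⟩ := isCompact_univ.elim_finite_subcover
    (fun k => {k' : K | k.1.1⁻¹ * k'.1.1 ∈ N k ∧ k'.1.2 ∈ C k})
    (fun k => ((N k).isOpen.preimage (by fun_prop)).inter ((hC k).isOpen.preimage (by fun_prop)))
    (fun k _ => Set.mem_iUnion.mpr ⟨k, by simp, hkC k⟩)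
  obtain ⟨U, hU⟩ := ProfiniteGrp.exist_openNormalSubgroup_sub_open_nhds_of_one
    (isOpen_biInter_finset fun k _ => (N k).isOpen) (Set.mem_iInter₂.mpr fun k _ => one_mem (N k))
  refine ⟨U, t.inf fun k => DiscreteQuotient.ofIsClopen (hC k), fun k₁ k₂ hU₁₂ hD₁₂ => ?_⟩
  obtain ⟨k, hk, hk₁N, hk₁C⟩ := Set.mem_iUnion₂.mp (ht (Set.mem_univ k₁))
  have hk₂N : k.1.1⁻¹ * k₂.1.1 ∈ N k := by
    simpa [mul_assoc] using mul_mem hk₁N (Set.mem_iInter₂.mp (hU hU₁₂) k hk)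
  have hk₂C : k₂.1.2 ∈ C k :=
    (Quotient.exact (DiscreteQuotient.proj_eq_of_le (Finset.inf_le hk) hD₁₂)).mp hk₁C
  rw [hNC k k₁ hk₁N hk₁C, hNC k k₂ hk₂N hk₂C]

end Profinite

section ProfiniteGroup

variable {G α : Type*} [Group G] [TopologicalSpace G] [IsTopologicalGroup G]
  [CompactSpace G] [TotallyDisconnectedSpace G]

theorem exists_openNormalSubgroup_of_isLocallyConstant {f : G → α}
    (hf : IsLocallyConstant f) :
    ∃ U : OpenNormalSubgroup G, ∀ g g', g⁻¹ * g' ∈ U → f g = f g' := by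
  obtain ⟨U, _, hU⟩ := exists_openNormalSubgroup_discreteQuotient_of_isLocallyConstant
    (Z := Unit) isClosed_univ (hf.comp_continuous (continuous_fst.comp continuous_subtype_val))
  exact ⟨U, fun g g' h => hU ⟨(g, ⟨⟩), trivial⟩ ⟨(g', ⟨⟩), trivial⟩ h rfl⟩

theorem exists_openNormalSubgroup_of_isLocallyConstant_prod {f : G × G → α}
    (hf : IsLocallyConstant f) :
    ∃ U : OpenNormalSubgroup G, ∀ g₁ g₂ g₁' g₂', g₁⁻¹ * g₁' ∈ U → g₂⁻¹ * g₂' ∈ U →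
      f (g₁, g₂) = f (g₁', g₂') := by
  obtain ⟨W, hW⟩ := exists_openNormalSubgroup_of_isLocallyConstant hf
  obtain ⟨U, hU⟩ := ProfiniteGrp.exist_openNormalSubgroup_sub_open_nhds_of_one
    ((W.isOpen.preimage (continuous_id.prodMk continuous_const)).inter
      (W.isOpen.preimage (continuous_const.prodMk continuous_id))) ⟨one_mem W, one_mem W⟩
  refine ⟨U, fun g₁ g₂ g₁' g₂' h₁ h₂ => hW _ _ ?_⟩
  have : (g₁⁻¹ * g₁', (1 : G)) * (1, g₂⁻¹ * g₂') ∈ W := mul_mem (hU h₁).1 (hU h₂).2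
  simpa using this

end ProfiniteGroup

section Partition

variable {X β : Type*} [TopologicalSpace X] {τ : X → Set β}

theorem isClosed_setOf_superset (hτ : ∀ b, IsClosed {x | b ∈ τ x}) (A : Set β) :
    IsClosed {x | A ⊆ τ x} := by
  simpa only [Set.subset_def, Set.ofPred_forall] using isClosed_biInter fun b (_ : b ∈ A) => hτ b

theorem isOpen_setOf_subset_s8 [Finite β] (hτ : ∀ b, IsClosed {x | b ∈ τ x}) (A : Set β) :
    IsOpen {x | τ x ⊆ A} := by
  have : {x | τ x ⊆ A} = ⋂ b ∈ Aᶜ, {x | b ∈ τ x}ᶜ := by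
    ext x
    simp only [Set.mem_ofPred_eq, Set.mem_iInter, Set.mem_compl_iff, Set.subset_def]
    exact forall_congr' fun b => not_imp_not.symm
  rw [this]
  exact (Set.toFinite _).isOpen_biInter fun b _ => (hτ b).isOpen_compl

variable [CompactSpace X] [T2Space X] [TotallyDisconnectedSpace X] [Finite β]

theorem exists_isClopen_subset_dominated (D₀ : DiscreteQuotient X)
    (hτ : ∀ b, IsClosed {x | b ∈ τ x}) {P : Set X} (hP : IsClopen P) (hne : P.Nonempty) :
    ∃ (C : Set X) (x₁ : X), IsClopen C ∧ C ⊆ P ∧ x₁ ∈ C ∧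
      (∀ x ∈ C, D₀.proj x = D₀.proj x₁ ∧ τ x ⊆ τ x₁) ∧
      ∀ x ∈ P, D₀.proj x = D₀.proj x₁ → τ x = τ x₁ → x ∈ C := by
  obtain ⟨x₀, hx₀⟩ := hne
  set P₀ := P ∩ D₀.proj ⁻¹' {D₀.proj x₀}
  have hP₀ : IsClopen P₀ := hP.inter (D₀.isClopen_preimage _)
  obtain ⟨x₁, hx₁P₀, hx₁max⟩ :=
    Set.Finite.exists_maximalFor' τ P₀ (Set.toFinite _) ⟨x₀, hx₀, rfl⟩
  obtain ⟨C, hC, hFC, hCO⟩ := exists_clopen_of_closed_subset_open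
    (hP₀.isClosed.inter (isClosed_setOf_superset hτ (τ x₁)))
    (hP₀.isOpen.inter (isOpen_setOf_subset_s8 hτ (τ x₁)))
    (fun x hx => ⟨hx.1, hx₁max hx.1 hx.2⟩)
  have hD₁ : D₀.proj x₁ = D₀.proj x₀ := hx₁P₀.2
  refine ⟨C, x₁, hC, fun x hx => (hCO hx).1.1, hFC ⟨hx₁P₀, Set.Subset.rfl⟩,
    fun x hx => ⟨(hCO hx).1.2.trans hD₁.symm, (hCO hx).2⟩,
    fun x hxP hxD hxτ => hFC ⟨⟨hxP, hxD.trans hD₁⟩, hxτ.symm.subset⟩⟩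

theorem exists_isLocallyConstant_dominated_on (D₀ : DiscreteQuotient X)
    (hτ : ∀ b, IsClosed {x | b ∈ τ x}) {P : Set X} (hP : IsClopen P) :
    ∃ π : X → ℕ, IsLocallyConstant π ∧ ∀ x ∈ P, ∃ x₀ ∈ P, π x₀ = π x ∧
      ∀ x' ∈ P, π x' = π x → D₀.proj x' = D₀.proj x₀ ∧ τ x' ⊆ τ x₀ := by
  classical
  induction hn : ((fun x => (D₀.proj x, τ x)) '' P).ncard using Nat.strong_induction_on
    generalizing P with
  | _ n ih =>
  rcases P.eq_empty_or_nonempty with rfl | hne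
  · exact ⟨0, IsLocallyConstant.const 0, by simp⟩
  obtain ⟨C, x₁, hC, hCP, hx₁C, hCdom, hCmax⟩ := exists_isClopen_subset_dominated D₀ hτ hP hne
  have hlt : ((fun x => (D₀.proj x, τ x)) '' (P \ C)).ncard < n := by
    rw [← hn]
    refine Set.ncard_lt_ncard ((Set.ssubset_iff_of_subset (Set.image_mono Set.sdiff_subset)).2
      ⟨_, ⟨x₁, hCP hx₁C, rfl⟩, ?_⟩) (Set.toFinite _)
    rintro ⟨x, ⟨hxP, hxC⟩, hx⟩
    exact hxC (hCmax x hxP (Prod.ext_iff.mp hx).1 (Prod.ext_iff.mp hx).2)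
  obtain ⟨π, hπ, hπdom⟩ := ih _ hlt (hP.diff hC) rfl
  refine ⟨fun x => if x ∈ C then 0 else π x + 1,
    hC.isLocallyConstant_ite (IsLocallyConstant.const 0) (hπ.comp (· + 1)), fun x hxP => ?_⟩
  by_cases hxC : x ∈ C
  · refine ⟨x₁, hCP hx₁C, by simp [hxC, hx₁C], fun x' _ hx' => hCdom x' ?_⟩
    by_contra hx'C
    simp [hxC, hx'C] at hx'
  · obtain ⟨x₀, ⟨hx₀P, hx₀C⟩, hx₀, hx₀dom⟩ := hπdom x ⟨hxP, hxC⟩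
    refine ⟨x₀, hx₀P, by simp [hxC, hx₀C, hx₀], fun x' hx'P hx' => ?_⟩
    by_cases hx'C : x' ∈ C
    · simp [hxC, hx'C] at hx'
    · exact hx₀dom x' ⟨hx'P, hx'C⟩ (by simpa [hxC, hx'C] using hx')

theorem exists_discreteQuotient_le_forall_subset (D₀ : DiscreteQuotient X)
    (hτ : ∀ b, IsClosed {x | b ∈ τ x}) :
    ∃ D : DiscreteQuotient X, D ≤ D₀ ∧ ∀ x, ∃ x₀, D.proj x₀ = D.proj x ∧
      ∀ x', D.proj x' = D.proj x → τ x' ⊆ τ x₀ := by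
  obtain ⟨π, hπ, hπdom⟩ := exists_isLocallyConstant_dominated_on D₀ hτ isClopen_univ
  let D := (⟨π, hπ⟩ : LocallyConstant X ℕ).discreteQuotient
  have hD : ∀ x x', D.proj x = D.proj x' ↔ π x = π x' := fun x x' => Quotient.eq
  refine ⟨D, fun x x' hxx' => ?_, fun x => ?_⟩
  · obtain ⟨x₀, -, -, hx₀⟩ := hπdom x trivial
    exact Quotient.exact ((hx₀ x trivial rfl).1.trans (hx₀ x' trivial hxx'.symm).1.symm)
  · obtain ⟨x₀, -, hx₀, hx₀dom⟩ := hπdom x trivial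
    exact ⟨x₀, (hD _ _).2 hx₀, fun x' hx' => (hx₀dom x' trivial ((hD _ _).1 hx')).2⟩

end Partition

theorem QuotientGroup.subset_mul_of_image_mk_subset {G : Type*} [Group G] {N : Subgroup G}
    {A B : Set G} (h : (QuotientGroup.mk '' A : Set (G ⧸ N)) ⊆ QuotientGroup.mk '' B) :
    A ⊆ B * N := fun a ha => by
  rw [← QuotientGroup.preimage_image_mk_eq_mul]
  exact h ⟨a, ha, rfl⟩

theorem isClosed_setOf_mem_image_mk {G X : Type*} [Group G] [TopologicalSpace G]
    [SeparatelyContinuousMul G] [CompactSpace G] [TopologicalSpace X] {S : X → Subgroup G}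
    (hS : IsClosed {gx : G × X | gx.1 ∈ S gx.2}) (U : OpenSubgroup G) (c : G ⧸ U.toSubgroup) :
    IsClosed {x | c ∈ (QuotientGroup.mk '' (S x : Set G) : Set (G ⧸ U.toSubgroup))} := by
  have : {x | c ∈ (QuotientGroup.mk '' (S x : Set G) : Set (G ⧸ U.toSubgroup))} =
      Prod.snd '' ({gx : G × X | gx.1 ∈ S gx.2} ∩ Prod.fst ⁻¹' (QuotientGroup.mk ⁻¹' {c})) := by
    ext x
    simp [and_comm]
  rw [this]
  exact isClosedMap_snd_of_compactSpace _
    (hS.inter (((isClosed_discrete {c}).preimage continuous_quot_mk).preimage continuous_fst))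

theorem zeta_kappa_factor_through_finite_quotient_general
    (G : Type) [Group G] [TopologicalSpace G] [IsTopologicalGroup G]
    [CompactSpace G] [TotallyDisconnectedSpace G]
    (X : Type) [TopologicalSpace X] [CompactSpace X] [T2Space X]
    [TotallyDisconnectedSpace X]
    (S : X → Subgroup G)
    (hidx : IsClosed {gx : G × X | gx.1 ∈ S gx.2})
    (E : Type) [Group E] [TopologicalSpace E] [IsTopologicalGroup E]
    [T2Space E]
    (p : E →* G)
    (hker_fin : Finite p.ker)
    (q : {gx : G × X // gx.1 ∈ S gx.2} → E) (hqc : Continuous q)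
    (hqp : ∀ (x : X) (s : G) (hs : s ∈ S x), p (q ⟨(s, x), hs⟩) = s)
    (r : G → E) (hrc : Continuous r) (hrp : ∀ g, p (r g) = g) :
    Continuous (fun gg : G × G => r gg.1 * r gg.2 * (r (gg.1 * gg.2))⁻¹) ∧
    Continuous (fun sx : {gx : G × X // gx.1 ∈ S gx.2} => r sx.1.1 * (q sx)⁻¹) ∧
    ∃ (U : Subgroup G), U.Normal ∧ IsOpen (U : Set G) ∧
      ∃ (Y : Type) (_ : Finite Y) (π : X → Y),
        Function.Surjective π ∧
        (∀ y, IsClopen (π ⁻¹' {y})) ∧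
        (∀ y, ∃ x, π x = y ∧
          ∀ x', π x' = y → (S x' : Set G) ⊆ (S x : Set G) * (U : Set G)) ∧
        (∀ g₁ g₂ g₁' g₂' : G, g₁⁻¹ * g₁' ∈ U → g₂⁻¹ * g₂' ∈ U →
          r g₁ * r g₂ * (r (g₁ * g₂))⁻¹ = r g₁' * r g₂' * (r (g₁' * g₂'))⁻¹) ∧
        (∀ (x x' : X) (s s' : G) (hs : s ∈ S x) (hs' : s' ∈ S x'),
          s⁻¹ * s' ∈ U → π x = π x' →
          r s * (q ⟨(s, x), hs⟩)⁻¹ = r s' * (q ⟨(s', x'), hs'⟩)⁻¹) := by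
  set ζ : G × G → E := fun gg => r gg.1 * r gg.2 * (r (gg.1 * gg.2))⁻¹
  set κ : {gx : G × X // gx.1 ∈ S gx.2} → E := fun sx => r sx.1.1 * (q sx)⁻¹
  have hζc : Continuous ζ := by fun_prop
  have hκc : Continuous κ := by fun_prop
  have hker : (p.ker : Set E).Finite := Set.toFinite _
  obtain ⟨U₁, hU₁⟩ := exists_openNormalSubgroup_of_isLocallyConstant_prod
    (hζc.isLocallyConstant_of_forall_mem hker fun g => by simp [ζ, hrp])
  obtain ⟨U₂, D₀, hU₂⟩ := exists_openNormalSubgroup_discreteQuotient_of_isLocallyConstant hidx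
    (hκc.isLocallyConstant_of_forall_mem hker fun ⟨⟨s, x⟩, hs⟩ => by simp [κ, hrp, hqp x s hs])
  set U := U₁ ⊓ U₂
  obtain ⟨D, hDD₀, hD⟩ := exists_discreteQuotient_le_forall_subset D₀
    (isClosed_setOf_mem_image_mk hidx U.toOpenSubgroup)
  refine ⟨hζc, hκc, U, U.isNormal', U.isOpen, D, inferInstance, D.proj, D.proj_surjective,
    fun y => D.isClopen_preimage {y}, fun y => ?_,
    fun g₁ g₂ g₁' g₂' h₁ h₂ =>
      hU₁ g₁ g₂ g₁' g₂' (inf_le_left (b := U₂) h₁) (inf_le_left (b := U₂) h₂),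
    fun x x' s s' hs hs' hss' hxx' =>
      hU₂ ⟨(s, x), hs⟩ ⟨(s', x'), hs'⟩ (inf_le_right (a := U₁) hss')
        (DiscreteQuotient.proj_eq_of_le hDD₀ hxx')⟩
  obtain ⟨x, rfl⟩ := D.proj_surjective y
  obtain ⟨x₀, hx₀, hx₀dom⟩ := hD x
  exact ⟨x₀, hx₀, fun x' hx' => QuotientGroup.subset_mul_of_image_mk_subset (hx₀dom x' hx')⟩

/-- Let `(G,𝒮)` be a profinite group pair, `A` a finite abelian group
with `G`-action, realised as the kernel of a continuous extension `0 → A → E → G → 1` of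
profinite groups, with the `G`-action induced by conjugation in `E`.  Given continuous
splittings `q : 𝒮 → E` and a continuous set-theoretic section `r : G → E` of `p` with
`r 1 = 1`, the maps `ζ(g₁,g₂) = r g₁ * r g₂ * (r(g₁g₂))⁻¹` and `κ(s,x) = r s * q(s,x)⁻¹`
are continuous, and there is a finite quotient `(U,𝒯,Y)` of `𝒮` such that `ζ` factors
through `G/U × G/U` and `κ` factors through the natural map `𝒮 → 𝒯`. -/
theorem zeta_kappa_factor_through_finite_quotient
    (G : Type) [Group G] [TopologicalSpace G] [IsTopologicalGroup G]
    [CompactSpace G] [T2Space G] [TotallyDisconnectedSpace G]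
    (X : Type) [TopologicalSpace X] [CompactSpace X] [T2Space X]
    [TotallyDisconnectedSpace X]
    (S : X → Subgroup G) (hclosed : ∀ x, IsClosed (S x : Set G))
    (hidx : IsClosed {gx : G × X | gx.1 ∈ S gx.2})
    (E : Type) [Group E] [TopologicalSpace E] [IsTopologicalGroup E]
    [CompactSpace E] [T2Space E] [TotallyDisconnectedSpace E]
    (p : E →* G) (hpc : Continuous p) (hps : Function.Surjective p)
    (hker_fin : Finite p.ker) (hker_ab : ∀ a b : p.ker, a * b = b * a)
    (ρ : G →* MulAut p.ker)
    (hρ : ∀ (g : G) (a : p.ker) (e : E), p e = g → ((ρ g a : p.ker) : E) = e * ↑a * e⁻¹)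
    (q : {gx : G × X // gx.1 ∈ S gx.2} → E) (hqc : Continuous q)
    (hqmul : ∀ (x : X) (s s' : G) (hs : s ∈ S x) (hs' : s' ∈ S x),
        q ⟨(s * s', x), mul_mem hs hs'⟩ = q ⟨(s, x), hs⟩ * q ⟨(s', x), hs'⟩)
    (hqp : ∀ (x : X) (s : G) (hs : s ∈ S x), p (q ⟨(s, x), hs⟩) = s)
    (r : G → E) (hrc : Continuous r) (hrp : ∀ g, p (r g) = g) (hr1 : r 1 = 1) :
    Continuous (fun gg : G × G => r gg.1 * r gg.2 * (r (gg.1 * gg.2))⁻¹) ∧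
    Continuous (fun sx : {gx : G × X // gx.1 ∈ S gx.2} => r sx.1.1 * (q sx)⁻¹) ∧
    ∃ (U : Subgroup G), U.Normal ∧ IsOpen (U : Set G) ∧
      ∃ (Y : Type) (_ : Finite Y) (π : X → Y),
        Function.Surjective π ∧
        (∀ y, IsClopen (π ⁻¹' {y})) ∧
        (∀ y, ∃ x, π x = y ∧
          ∀ x', π x' = y → (S x' : Set G) ⊆ (S x : Set G) * (U : Set G)) ∧
        (∀ g₁ g₂ g₁' g₂' : G, g₁⁻¹ * g₁' ∈ U → g₂⁻¹ * g₂' ∈ U →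
          r g₁ * r g₂ * (r (g₁ * g₂))⁻¹ = r g₁' * r g₂' * (r (g₁' * g₂'))⁻¹) ∧
        (∀ (x x' : X) (s s' : G) (hs : s ∈ S x) (hs' : s' ∈ S x'),
          s⁻¹ * s' ∈ U → π x = π x' →
          r s * (q ⟨(s, x), hs⟩)⁻¹ = r s' * (q ⟨(s', x'), hs'⟩)⁻¹) :=
  zeta_kappa_factor_through_finite_quotient_general G X S hidx E p hker_fin q hqc hqp r hrc hrp
end

section
/- Let p be a prime, H a profinite group, and K a finite normal subgroup of H such that H/K is a pro-p group. Let P be a closed pro-p subgroup of H with PK = H and with P ∩ K a Sylow p-subgroup of K. Let {T_x}_{x∈X} be a family of closed pro-p subgroups of H continuously indexed by a profinite space X. Then there exists a continuous function c : X → K such that c(x) T_x c(x)^{-1} ≤ P for all x ∈ X. -/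
/-! Since `P K = H`, the index of `P` in `H` equals `[K : P ∩ K]`, which is prime to `p`; so `P`
has finite index, and being closed it is open. Modulo the open normal core `N` of `P`, the image
of `P` is then a Sylow subgroup of the finite group `H / N` and each `T x` maps to a `p`-subgroup,
so some conjugate of `T x` lies in `P`; writing the conjugator as `a k` with `a ∈ P`, `k ∈ K`, the
element `k` already does the job. For fixed `k ∈ K` the condition `k (T x) k⁻¹ ≤ P` is open in `x`
because `P` is open and `H` is compact, so these finitely many open sets cover the profinite space
`X` and admit a locally constant choice of `k`. -/

open Pointwise

/-- A topological group is pro-`p` if all of its continuous finite quotients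
(i.e. quotients by open normal subgroups) are `p`-groups. -/
def IsProP (p : ℕ) (G : Type) [Group G] [TopologicalSpace G] : Prop :=
  ∀ (U : Subgroup G) [U.Normal], IsOpen (U : Set G) → IsPGroup p (G ⧸ U)

theorem Subgroup.relIndex_eq_index_of_mul_eq_univ {G : Type*} [Group G] {P K : Subgroup G}
    (hPK : (P : Set G) * (K : Set G) = Set.univ) : P.relIndex K = P.index := by
  have horbit : MulAction.orbit K ((1 : G) : G ⧸ P) = Set.univ := by
    refine Set.eq_univ_of_forall fun a => QuotientGroup.induction_on a fun g => ?_
    obtain ⟨q, hq, k, hk, hqk⟩ := Set.mem_mul.mp (hPK ▸ Set.mem_univ g⁻¹)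
    refine ⟨⟨k, hk⟩⁻¹, ?_⟩
    show ((k⁻¹ * 1 : G) : G ⧸ P) = g
    have hkg : k * g = q⁻¹ := calc
      k * g = q⁻¹ * (q * k) * g := by group
      _ = q⁻¹ := by rw [hqk]; group
    rw [QuotientGroup.eq, mul_one, inv_inv, hkg]
    exact P.inv_mem hq
  have hstab : MulAction.stabilizer K ((1 : G) : G ⧸ P) = P.subgroupOf K := by
    ext k
    show (k : G) • ((1 : G) : G ⧸ P) = _ ↔ _
    rw [← MulAction.mem_stabilizer_iff, MulAction.stabilizer_quotient, Subgroup.mem_subgroupOf]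
  rw [Subgroup.relIndex, ← hstab, MulAction.index_stabilizer, horbit, Set.ncard_univ,
    Subgroup.index]

theorem exists_mem_conj_mem_of_mul_eq_univ {H : Type*} [Group H] {P K : Subgroup H}
    (hPK : (P : Set H) * (K : Set H) = Set.univ) {S : Set H} {g : H}
    (hg : ∀ s ∈ S, g * s * g⁻¹ ∈ P) : ∃ k ∈ K, ∀ s ∈ S, k * s * k⁻¹ ∈ P := by
  obtain ⟨a, ha, k, hk, rfl⟩ := Set.mem_mul.mp (hPK ▸ Set.mem_univ g)
  refine ⟨k, hk, fun s hs => ?_⟩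
  have hconj : k * s * k⁻¹ = a⁻¹ * (a * k * s * (a * k)⁻¹) * a := by group
  rw [hconj]
  exact P.mul_mem (P.mul_mem (P.inv_mem ha) (hg s hs)) ha

theorem IsPGroup.exists_conj_mem_of_not_dvd_index {p : ℕ} [Fact p.Prime] {G : Type*} [Group G]
    [Finite (Sylow p G)] {P Q : Subgroup G} (hP : IsPGroup p P) (hPi : ¬ p ∣ P.index)
    (hQ : IsPGroup p Q) : ∃ g : G, ∀ q ∈ Q, g * q * g⁻¹ ∈ P := by
  obtain ⟨S, hQS⟩ := hQ.exists_le_sylow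
  obtain ⟨g, hg⟩ := MulAction.exists_smul_eq G S (hP.toSylow hPi)
  refine ⟨g, fun q hq => ?_⟩
  have : MulAut.conj g • q ∈ MulAut.conj g • (S : Subgroup G) :=
    Subgroup.smul_mem_pointwise_smul _ _ _ (hQS hq)
  rwa [← Sylow.coe_subgroup_smul, hg, IsPGroup.toSylow_coe] at this

theorem IsProP.isPGroup_map {p : ℕ} {G H : Type} [Group G] [Group H] [TopologicalSpace H]
    {S : Subgroup H} (hS : IsProP p S) (f : H →* G) (hf : IsOpen (f.ker : Set H)) :
    IsPGroup p (S.map f) := by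
  have hker : IsOpen ((f.comp S.subtype).ker : Set S) := hf.preimage continuous_subtype_val
  have := (hS _ hker).of_equiv (QuotientGroup.quotientKerEquivRange (f.comp S.subtype))
  rwa [MonoidHom.range_comp, Subgroup.range_subtype] at this

theorem IsProP.exists_conj_mem {p : ℕ} [Fact p.Prime] {H : Type} [Group H] [TopologicalSpace H]
    [IsTopologicalGroup H] {P T : Subgroup H} (hPo : IsOpen (P : Set H)) (hPi : ¬ p ∣ P.index)
    (hP : IsProP p P) (hT : IsProP p T) : ∃ g : H, ∀ t ∈ T, g * t * g⁻¹ ∈ P := by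
  have : P.FiniteIndex := ⟨fun h => hPi (h ▸ dvd_zero p)⟩
  set π := QuotientGroup.mk' P.normalCore
  have hker : IsOpen (π.ker : Set H) := by
    rw [QuotientGroup.ker_mk']
    exact P.normalCore.isOpen_of_isClosed_of_finiteIndex
      (P.normalCore_isClosed (P.isClosed_of_isOpen hPo))
  have hkerP : π.ker ≤ P := (QuotientGroup.ker_mk' _).trans_le P.normalCore_le
  obtain ⟨g, hg⟩ := (hP.isPGroup_map π hker).exists_conj_mem_of_not_dvd_index
    (by rwa [P.index_map_eq (QuotientGroup.mk'_surjective _) hkerP]) (hT.isPGroup_map π hker)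
  obtain ⟨h, rfl⟩ := QuotientGroup.mk'_surjective _ g
  refine ⟨h, fun t ht => ?_⟩
  have := hg (π t) (Subgroup.mem_map_of_mem π ht)
  rwa [← map_inv, ← map_mul, ← map_mul, ← Subgroup.mem_comap,
    Subgroup.comap_map_eq_self hkerP] at this

theorem isOpen_setOf_forall_mem_imp_mem {H X : Type*} [TopologicalSpace H] [CompactSpace H]
    [TopologicalSpace X] {F : Set (H × X)} (hF : IsClosed F) {U : Set H} (hU : IsOpen U) :
    IsOpen {x | ∀ h, (h, x) ∈ F → h ∈ U} := by
  have hbad : IsClosed (Prod.snd '' (F ∩ Prod.fst ⁻¹' Uᶜ)) :=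
    isClosedMap_snd_of_compactSpace _ (hF.inter (hU.isClosed_compl.preimage continuous_fst))
  convert hbad.isOpen_compl using 1
  ext x
  simp

open Set TopologicalSpace in
theorem exists_isLocallyConstant_forall_mem_of_isOpen {X ι : Type*} [TopologicalSpace X]
    [CompactSpace X] [T2Space X] [TotallyDisconnectedSpace X] {A : ι → Set X}
    (hA : ∀ i, IsOpen (A i)) (hcov : ∀ x, ∃ i, x ∈ A i) :
    ∃ f : X → ι, IsLocallyConstant f ∧ ∀ x, x ∈ A (f x) := by
  obtain ⟨n, W, hWA, hWcov, hWdisj⟩ :=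
    (IsOpenCover.of_sets hA (eq_univ_of_forall fun x => mem_iUnion.mpr (hcov x))
      ).exists_finite_nonempty_disjoint_clopen_cover
  choose piece hpiece using fun x => mem_iUnion.mp (hWcov (mem_univ x))
  choose label hlabel using fun j => (hWA j).2
  have piece_eq : ∀ j, ∀ y ∈ W j, piece y = j := fun j y hy => by
    by_contra hne
    exact Set.disjoint_left.mp (Clopens.coe_disjoint.mpr (hWdisj hne)) (hpiece y) hy
  have piece_lc : IsLocallyConstant piece := IsLocallyConstant.iff_exists_open _ |>.mpr
    fun x => ⟨W (piece x), (W (piece x)).isOpen, hpiece x, piece_eq _⟩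
  exact ⟨label ∘ piece, piece_lc.comp label, fun x => hlabel _ (hpiece x)⟩

theorem conjugate_family_into_sylow_general (p : ℕ) (hp : p.Prime)
    (H : Type) [Group H] [TopologicalSpace H] [IsTopologicalGroup H]
    [CompactSpace H]
    (K : Subgroup H) (hKfin : Finite K)
    (P : Subgroup H) (hPclosed : IsClosed (P : Set H)) (hPp : IsProP p P)
    (hPK : (P : Set H) * (K : Set H) = Set.univ)
    (hSylow : ∃ Pk : Sylow p K, (Pk : Subgroup K) = (P ⊓ K).subgroupOf K)
    (X : Type) [TopologicalSpace X] [CompactSpace X] [T2Space X]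
    [TotallyDisconnectedSpace X]
    (T : X → Subgroup H)
    (hTidx : IsClosed {hx : H × X | hx.1 ∈ T hx.2})
    (hTp : ∀ x, IsProP p (T x)) :
    ∃ c : X → H, Continuous c ∧ (∀ x, c x ∈ K) ∧
      ∀ x, ∀ t ∈ T x, c x * t * (c x)⁻¹ ∈ P := by
  have : Fact p.Prime := ⟨hp⟩
  obtain ⟨Pk, hPk⟩ := hSylow
  have hindex : ¬ p ∣ P.index := by
    have := Pk.not_dvd_index
    rwa [hPk, ← Subgroup.relIndex, Subgroup.inf_relIndex_right,
      Subgroup.relIndex_eq_index_of_mul_eq_univ hPK] at this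
  have : P.FiniteIndex := ⟨fun h => hindex (h ▸ dvd_zero p)⟩
  have hPopen : IsOpen (P : Set H) := P.isOpen_of_isClosed_of_finiteIndex hPclosed
  let A : K → Set X := fun k => {x | ∀ t ∈ T x, (k : H) * t * (k : H)⁻¹ ∈ P}
  have hAopen : ∀ k, IsOpen (A k) := fun k =>
    isOpen_setOf_forall_mem_imp_mem hTidx (hPopen.preimage (by fun_prop : Continuous
      fun h => (k : H) * h * (k : H)⁻¹))
  have hAcov : ∀ x, ∃ k, x ∈ A k := fun x => by
    obtain ⟨g, hg⟩ := IsProP.exists_conj_mem hPopen hindex hPp (hTp x)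
    obtain ⟨k, hk, hkT⟩ := exists_mem_conj_mem_of_mul_eq_univ hPK hg
    exact ⟨⟨k, hk⟩, hkT⟩
  obtain ⟨c, hc, hcA⟩ := exists_isLocallyConstant_forall_mem_of_isOpen hAopen hAcov
  exact ⟨fun x => c x, (hc.comp _).continuous, fun x => (c x).2, hcA⟩

/-- Let `p` be a prime, `H` a profinite group and `K` a finite normal
subgroup of `H` with `H/K` pro-`p`.  Let `P` be a closed pro-`p` subgroup of `H` with
`PK = H` and with `P ∩ K` a Sylow `p`-subgroup of `K`.  Then every continuously indexed
family `{T x}_{x ∈ X}` of closed pro-`p` subgroups of `H` can be conjugated into `P` by a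
continuous function `c : X → K`. -/
theorem conjugate_family_into_sylow (p : ℕ) (hp : p.Prime)
    (H : Type) [Group H] [TopologicalSpace H] [IsTopologicalGroup H]
    [CompactSpace H] [T2Space H] [TotallyDisconnectedSpace H]
    (K : Subgroup H) [K.Normal] (hKfin : Finite K)
    (hHK : IsProP p (H ⧸ K))
    (P : Subgroup H) (hPclosed : IsClosed (P : Set H)) (hPp : IsProP p P)
    (hPK : (P : Set H) * (K : Set H) = Set.univ)
    (hSylow : ∃ Pk : Sylow p K, (Pk : Subgroup K) = (P ⊓ K).subgroupOf K)
    (X : Type) [TopologicalSpace X] [CompactSpace X] [T2Space X]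
    [TotallyDisconnectedSpace X]
    (T : X → Subgroup H) (hTclosed : ∀ x, IsClosed (T x : Set H))
    (hTidx : IsClosed {hx : H × X | hx.1 ∈ T hx.2})
    (hTp : ∀ x, IsProP p (T x)) :
    ∃ c : X → H, Continuous c ∧ (∀ x, c x ∈ K) ∧
      ∀ x, ∀ t ∈ T x, c x * t * (c x)⁻¹ ∈ P :=
  conjugate_family_into_sylow_general p hp H K hKfin P hPclosed hPp hPK hSylow X T hTidx hTp
end
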